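/- arXiv:1109.4860 — 9 statements merged into one kernel-verified Lean document; each statement's English description precedes it below -/
import Mathlib

section
/- If the component lifetimes X_1,…,X_n are exchangeable (the joint law of (X_{σ(1)},…,X_{σ(n)}) equals that of (X_1,…,X_n) for every permutation σ of [n]) and have no ties, then for every j ∈ [n] and every A ⊆ [n]\{j} one has q_j(A) = 1/(n·C(n−1,|A|)), where C denotes the binomial coefficient. -/
/-!
Call `(j, A)` with `j ∉ A` a rank pattern of the lifetimes `f` when the components of `A` outlive
`j` and all others fail before `j`. For fixed `k = #A` there are `n * (n - 1).choose k` patterns.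
Exchangeability makes them all equally likely, since a permutation maps any of them to any other.
Without ties, each outcome realises exactly one of them: `j` must be the unique component with
exactly `k` longer lifetimes, and then `A` is the set of those components. So the probabilities
sum to `1`, and each of them is `1 / (n * (n - 1).choose k)`.
-/

open MeasureTheory ProbabilityTheory Finset

open scoped ENNReal

namespace BarlowProschan

variable {ι α : Type*} [LinearOrder α]

def rankPattern (j : ι) (A : Finset ι) : Set (ι → α) :=
  {f | (∀ i, i ∉ A → i ≠ j → f i < f j) ∧ ∀ i ∈ A, f j < f i}

theorem comp_perm_mem_rankPattern_iff (σ : Equiv.Perm ι) {f : ι → α} {j : ι}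
    {A : Finset ι} :
    f ∘ σ ∈ rankPattern j A ↔ f ∈ rankPattern (σ j) (A.map σ.toEmbedding) := by
  simp only [rankPattern, Set.mem_ofPred_eq, Function.comp_apply, forall_mem_map,
    Equiv.coe_toEmbedding]
  conv_rhs => rw [← σ.forall_congr_right]
  simp only [mem_map_equiv, Equiv.symm_apply_apply, σ.injective.ne_iff]

theorem exists_perm_apply_eq_and_map_eq [DecidableEq ι] {j j' : ι} {A A' : Finset ι}
    (hj : j ∉ A) (hj' : j' ∉ A') (hcard : #A = #A') :
    ∃ σ : Equiv.Perm ι, σ j = j' ∧ A.map σ.toEmbedding = A' := by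
  obtain ⟨τ, hτ⟩ := Equiv.Perm.exists_map_finset_eq (insert j A) (insert j' A')
    (by rw [card_insert_of_notMem hj, card_insert_of_notMem hj', hcard])
  have hτj : τ j ∈ insert j' A' := hτ ▸ mem_map_of_mem _ (mem_insert_self j A)
  have hswap : (insert j' A').map (Equiv.swap (τ j) j').toEmbedding = insert j' A' := by
    refine map_eq_of_subset fun x hx => ?_
    obtain ⟨y, hy, rfl⟩ := mem_map.1 hx
    rw [Equiv.coe_toEmbedding, Equiv.swap_apply_def]
    split_ifs
    exacts [mem_insert_self j' A', hτj, hy]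
  refine ⟨τ.trans (Equiv.swap (τ j) j'), Equiv.swap_apply_left _ _, ?_⟩
  rw [← erase_insert hj, map_erase, Equiv.trans_toEmbedding, ← map_map, hτ, hswap,
    Function.Embedding.trans_apply, Equiv.coe_toEmbedding, Equiv.coe_toEmbedding,
    Equiv.swap_apply_left, erase_insert hj']

theorem ae_injective {β : Type*} [Countable ι] [MeasurableSpace β] {ν : Measure (ι → β)}
    (hties : ∀ i j, i ≠ j → ν {f | f i = f j} = 0) :
    ∀ᵐ f ∂ν, Function.Injective f := by
  have hne : ∀ᵐ f ∂ν, ∀ i j, i ≠ j → f i ≠ f j :=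
    ae_all_iff.2 fun i => ae_all_iff.2 fun j => ae_iff.2 <| by
      by_cases hij : i = j
      · simp [hij]
      · simpa [hij] using hties i j hij
  filter_upwards [hne] with f hf i j hfij
  by_contra hij
  exact hf i j hij hfij

variable [Fintype ι]

theorem mem_rankPattern_iff {f : ι → α} {j : ι} {A : Finset ι} :
    f ∈ rankPattern j A ↔ (∀ i ≠ j, f i ≠ f j) ∧ A = ({i | f j < f i} : Finset ι) := by
  constructor
  · rintro ⟨hbelow, habove⟩
    refine ⟨fun i hij hfi => ?_, ?_⟩
    · by_cases hi : i ∈ A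
      · exact (habove i hi).ne' hfi
      · exact (hbelow i hi hij).ne hfi
    · ext i
      refine ⟨fun hi => mem_filter.2 ⟨mem_univ i, habove i hi⟩, fun hi => ?_⟩
      have hlt : f j < f i := (mem_filter.1 hi).2
      by_contra hiA
      obtain rfl | hij := eq_or_ne i j
      · exact hlt.false
      · exact (hbelow i hiA hij).asymm hlt
  · rintro ⟨hne, rfl⟩
    refine ⟨fun i hi hij => ?_, fun i hi => (mem_filter.1 hi).2⟩
    simp only [mem_filter, mem_univ, true_and, not_lt] at hi
    exact hi.lt_of_ne (hne i hij)

theorem card_filter_lt_lt_of_lt {f : ι → α} {j j' : ι} (h : f j < f j') :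
    #{i | f j' < f i} < #{i | f j < f i} := by
  refine card_lt_card (Finset.ssubset_iff_subset_ne.2 ⟨?_, fun heq => ?_⟩)
  · exact monotone_filter_right _ fun _ _ => h.trans
  · have : j' ∈ ({i | f j < f i} : Finset ι) := mem_filter.2 ⟨mem_univ _, h⟩
    rw [← heq, mem_filter] at this
    exact this.2.false

theorem eq_of_mem_rankPattern {f : ι → α} {j j' : ι} {A A' : Finset ι}
    (h : f ∈ rankPattern j A) (h' : f ∈ rankPattern j' A') (hcard : #A = #A') :
    j = j' ∧ A = A' := by
  rw [mem_rankPattern_iff] at h h'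
  obtain ⟨hne, rfl⟩ := h
  obtain ⟨-, rfl⟩ := h'
  obtain rfl | hjj' := eq_or_ne j j'
  · exact ⟨rfl, rfl⟩
  rcases (hne j' hjj'.symm).lt_or_gt with hlt | hlt
  · exact absurd hcard (card_filter_lt_lt_of_lt hlt).ne
  · exact absurd hcard (card_filter_lt_lt_of_lt hlt).ne'

theorem exists_card_filter_lt_eq {f : ι → α} (hf : Function.Injective f) {k : ℕ}
    (hk : k < Fintype.card ι) : ∃ j, #{i | f j < f i} = k := by
  set r : ι → ℕ := fun j => #{i | f j < f i}
  have hr : Function.Injective r := by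
    intro j j' hjj'
    by_contra hne
    rcases (hf.ne hne).lt_or_gt with hlt | hlt
    · exact (card_filter_lt_lt_of_lt hlt).ne' hjj'
    · exact (card_filter_lt_lt_of_lt hlt).ne hjj'
  have hrange : univ.image r = range (Fintype.card ι) := by
    refine eq_of_subset_of_card_le (fun m hm => ?_) ?_
    · obtain ⟨j, -, rfl⟩ := mem_image.1 hm
      exact mem_range.2 (card_lt_card (filter_ssubset.2 ⟨j, mem_univ j, lt_irrefl _⟩))
    · rw [card_image_of_injective _ hr, card_range, card_univ]
  obtain ⟨j, -, hj⟩ := mem_image.1 (hrange ▸ mem_range.2 hk)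
  exact ⟨j, hj⟩

def patternsOfCard [DecidableEq ι] (k : ℕ) : Finset (Σ _ : ι, Finset ι) :=
  univ.sigma fun j => (univ.erase j).powersetCard k

theorem mem_patternsOfCard [DecidableEq ι] {k : ℕ} {p : Σ _ : ι, Finset ι} :
    p ∈ patternsOfCard k ↔ p.1 ∉ p.2 ∧ #p.2 = k := by
  simp [patternsOfCard, subset_erase]

theorem card_patternsOfCard [DecidableEq ι] (k : ℕ) :
    #(patternsOfCard (ι := ι) k) = Fintype.card ι * (Fintype.card ι - 1).choose k := by
  simp [patternsOfCard, card_sigma, card_powersetCard, card_erase_of_mem]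

theorem pairwiseDisjoint_rankPattern [DecidableEq ι] (k : ℕ) :
    (patternsOfCard (ι := ι) k : Set (Σ _ : ι, Finset ι)).PairwiseDisjoint
      fun p => rankPattern (α := α) p.1 p.2 := by
  intro p hp q hq hpq
  refine Set.disjoint_left.2 fun f hfp hfq => hpq ?_
  have hcard := (mem_patternsOfCard.1 hp).2.trans (mem_patternsOfCard.1 hq).2.symm
  obtain ⟨hj, hA⟩ := eq_of_mem_rankPattern hfp hfq hcard
  exact Sigma.ext hj (heq_of_eq hA)

theorem mem_biUnion_rankPattern_of_injective [DecidableEq ι] {f : ι → α}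
    (hf : Function.Injective f) {k : ℕ} (hk : k < Fintype.card ι) :
    f ∈ ⋃ p ∈ patternsOfCard k, rankPattern p.1 p.2 := by
  obtain ⟨j, hj⟩ := exists_card_filter_lt_eq hf hk
  refine Set.mem_biUnion (x := ⟨j, ({i | f j < f i} : Finset ι)⟩)
    (mem_patternsOfCard.2 ⟨by simp, hj⟩) ?_
  exact mem_rankPattern_iff.2 ⟨fun i hi => hf.ne hi, rfl⟩

variable [TopologicalSpace α] [OrderClosedTopology α] [SecondCountableTopology α]
  [MeasurableSpace α] [OpensMeasurableSpace α]

theorem measurableSet_rankPattern (j : ι) (A : Finset ι) :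
    MeasurableSet (rankPattern (α := α) j A) := by
  unfold rankPattern
  measurability

variable {ν : Measure (ι → α)}

theorem measure_rankPattern_eq [DecidableEq ι]
    (hexch : ∀ σ : Equiv.Perm ι, ν.map (fun f => f ∘ σ) = ν) {j j' : ι} {A A' : Finset ι}
    (hj : j ∉ A) (hj' : j' ∉ A') (hcard : #A = #A') :
    ν (rankPattern j' A') = ν (rankPattern j A) := by
  obtain ⟨σ, rfl, rfl⟩ := exists_perm_apply_eq_and_map_eq hj hj' hcard
  have hpre : (fun f : ι → α => f ∘ σ) ⁻¹' rankPattern j A =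
      rankPattern (σ j) (A.map σ.toEmbedding) :=
    Set.ext fun f => comp_perm_mem_rankPattern_iff σ
  rw [← hpre, ← Measure.map_apply (by fun_prop) (measurableSet_rankPattern j A), hexch]

theorem measure_rankPattern [IsProbabilityMeasure ν] [DecidableEq ι]
    (hexch : ∀ σ : Equiv.Perm ι, ν.map (fun f => f ∘ σ) = ν)
    (hties : ∀ i j, i ≠ j → ν {f | f i = f j} = 0) {j : ι} {A : Finset ι} (hj : j ∉ A) :
    ν (rankPattern j A) =
      ((Fintype.card ι * (Fintype.card ι - 1).choose #A : ℕ) : ℝ≥0∞)⁻¹ := by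
  have hk : #A < Fintype.card ι :=
    card_lt_card (ssubset_univ_iff.2 fun h => hj (h ▸ mem_univ j))
  have hcover : ∀ᵐ f ∂ν, f ∈ ⋃ p ∈ patternsOfCard #A, rankPattern p.1 p.2 :=
    (ae_injective hties).mono fun f hf => mem_biUnion_rankPattern_of_injective hf hk
  have hsum : ∑ p ∈ patternsOfCard #A, ν (rankPattern p.1 p.2) = 1 := by
    rw [← measure_biUnion_finset (pairwiseDisjoint_rankPattern _) fun p _ =>
      measurableSet_rankPattern p.1 p.2]
    exact (mem_ae_iff_prob_eq_one (Finset.measurableSet_biUnion _ fun p _ =>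
      measurableSet_rankPattern p.1 p.2)).1 hcover
  rw [sum_congr rfl fun p hp => measure_rankPattern_eq hexch hj (mem_patternsOfCard.1 hp).1
    (mem_patternsOfCard.1 hp).2.symm, sum_const, card_patternsOfCard, nsmul_eq_mul] at hsum
  exact ENNReal.eq_inv_of_mul_eq_one_left (by rwa [mul_comm])

end BarlowProschan

open BarlowProschan in
theorem barlow_proschan_stmt_0
    {Ω : Type*} [MeasureSpace Ω] [IsProbabilityMeasure (ℙ : Measure Ω)]
    {n : ℕ} (X : Fin n → Ω → ℝ) (hX : ∀ i, Measurable (X i))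
    (hexch : ∀ σ : Equiv.Perm (Fin n),
      Measure.map (fun ω i => X (σ i) ω) (ℙ : Measure Ω)
        = Measure.map (fun ω i => X i ω) (ℙ : Measure Ω))
    (hties : ∀ i j : Fin n, i ≠ j → (ℙ : Measure Ω) {ω | X i ω = X j ω} = 0)
    (j : Fin n) (A : Finset (Fin n)) (hA : j ∉ A) :
    ((ℙ : Measure Ω) {ω | (∀ i, i ∉ A → i ≠ j → X i ω < X j ω) ∧
        ∀ i ∈ A, X j ω < X i ω}).toReal
      = 1 / (n * (n - 1).choose A.card) := by
  have hXm : Measurable fun ω i => X i ω := measurable_pi_lambda _ hX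
  set ν : Measure (Fin n → ℝ) := (ℙ : Measure Ω).map fun ω i => X i ω
  have hexch' : ∀ σ : Equiv.Perm (Fin n), ν.map (fun f => f ∘ σ) = ν := fun σ => by
    rw [Measure.map_map (by fun_prop) hXm]
    exact hexch σ
  have hties' : ∀ i j : Fin n, i ≠ j → ν {f | f i = f j} = 0 := fun i j hij => by
    rw [Measure.map_apply hXm
      (measurableSet_eq_fun (measurable_pi_apply i) (measurable_pi_apply j))]
    exact hties i j hij
  have : IsProbabilityMeasure ν := Measure.isProbabilityMeasure_map hXm.aemeasurable
  have hlaw := measure_rankPattern hexch' hties' hA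
  rw [Measure.map_apply hXm (measurableSet_rankPattern j A), Fintype.card_fin] at hlaw
  change ((ℙ : Measure Ω) ((fun ω i => X i ω) ⁻¹' rankPattern j A)).toReal = _
  rw [hlaw, ENNReal.toReal_inv, ENNReal.toReal_natCast, Nat.cast_mul, one_div]
end

section
/- For every semicoherent structure function φ and every j ∈ [n], the Barlow–Proschan index satisfies ℙ(T = X_j) = Σ_{A ⊆ [n]\{j}} q_j(A)·(φ(A∪{j}) − φ(A)) = Σ_{A ⊆ [n]} (−1)^{|{j}\A|} q_j(A\{j}) φ(A). -/
/-!
Outside a null set, the values `X i ω` (`i ≠ j`) avoid `X j ω`, so `ω` lies in exactly one of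
the events `{X i < X j < X k for i ∉ A, k ∈ A}`, namely for `A` the set of components outliving
`j`. On that event the system fails exactly with component `j` iff `A ∪ {j}` is a path set and
`A` is not: a path set not contained in `A ∪ {j}` contains a component dying before `j`, and a
path set not contained in `A` contains `j` or such a component. Summing over the partition gives
the first formula; the second one is a reindexing of the first.
-/

open MeasureTheory ProbabilityTheory Finset

section

variable {ι α : Type*}

def lifetime [CompleteLattice α] (S : Set (Finset ι)) (x : ι → α) : α :=
  ⨆ B ∈ S, ⨅ i ∈ B, x i

def ExactlyAbove [LT α] (x : ι → α) (j : ι) (A : Finset ι) : Prop :=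
  (∀ i, i ∉ A → i ≠ j → x i < x j) ∧ ∀ i ∈ A, x j < x i

namespace ExactlyAbove

variable [Preorder α] {x : ι → α} {j : ι} {A B : Finset ι}

theorem notMem (h : ExactlyAbove x j A) : j ∉ A :=
  fun hj => lt_irrefl _ (h.2 j hj)

theorem eq (hA : ExactlyAbove x j A) (hB : ExactlyAbove x j B) : A = B := by
  have key : ∀ {A B}, ExactlyAbove x j A → ExactlyAbove x j B → A ⊆ B := by
    intro A B hA hB i hi
    by_contra hiB
    exact lt_asymm (hA.2 i hi) (hB.1 i hiB (ne_of_mem_of_not_mem hi hA.notMem))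
  exact (key hA hB).antisymm (key hB hA)

theorem comp {β : Type*} [Preorder β] {f : α → β} (hf : StrictMono f)
    (h : ExactlyAbove x j A) : ExactlyAbove (f ∘ x) j A :=
  ⟨fun i hiA hij => hf (h.1 i hiA hij), fun i hi => hf (h.2 i hi)⟩

end ExactlyAbove

theorem exactlyAbove_filter_lt [LinearOrder α] [Fintype ι] {x : ι → α} {j : ι}
    (hx : ∀ i ≠ j, x i ≠ x j) : ExactlyAbove x j {i | x j < x i} :=
  ⟨fun i hi hij => (not_lt.1 fun h => hi (mem_filter.2 ⟨mem_univ i, h⟩)).lt_of_ne (hx i hij),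
    fun _ hi => (mem_filter.1 hi).2⟩

section Lifetime

variable [CompleteLinearOrder α] {S : Set (Finset ι)} {x : ι → α} {j : ι} {A : Finset ι}

theorem lt_lifetime_of_mem (h : ExactlyAbove x j A) (htop : x j < ⊤) (hA : A ∈ S) :
    x j < lifetime S x :=
  calc x j < ⨅ i ∈ A, x i := by
        rw [← Finset.inf_eq_iInf]
        exact (Finset.lt_inf_iff htop).2 h.2
    _ ≤ lifetime S x := le_iSup₂ (f := fun B _ => ⨅ i ∈ B, x i) A hA

theorem lifetime_lt_of_insert_notMem [Fintype ι] [DecidableEq ι] (hS : IsUpperSet S)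
    (h : ExactlyAbove x j A) (hbot : ⊥ < x j) (hA : insert j A ∉ S) :
    lifetime S x < x j := by
  calc lifetime S x ≤ (insert j A)ᶜ.sup x := iSup₂_le fun B hB => ?_
    _ < x j := (Finset.sup_lt_iff hbot).2 fun i hi => by
        rw [mem_compl, mem_insert, not_or] at hi
        exact h.1 i hi.2 hi.1
  obtain ⟨i, hiB, hi⟩ := not_subset.1 fun hsub => hA (hS hsub hB)
  exact (iInf₂_le i hiB).trans (le_sup (mem_compl.2 hi))

theorem lifetime_eq_of_insert_mem_of_notMem [DecidableEq ι] (hS : IsUpperSet S)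
    (h : ExactlyAbove x j A) (hjA : insert j A ∈ S) (hA : A ∉ S) : lifetime S x = x j := by
  apply le_antisymm
  · refine iSup₂_le fun B hB => ?_
    obtain ⟨i, hiB, hiA⟩ := not_subset.1 fun hsub => hA (hS hsub hB)
    refine (iInf₂_le i hiB).trans ?_
    rcases eq_or_ne i j with rfl | hij
    · exact le_rfl
    · exact (h.1 i hiA hij).le
  · refine le_iSup₂_of_le (f := fun B _ => ⨅ i ∈ B, x i) (insert j A) hjA
      (le_iInf₂ fun i hi => ?_)
    rcases mem_insert.1 hi with rfl | hiA
    · exact le_rfl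
    · exact (h.2 i hiA).le

theorem lifetime_eq_iff [Fintype ι] [DecidableEq ι] (hS : IsUpperSet S)
    (h : ExactlyAbove x j A) (hbot : ⊥ < x j) (htop : x j < ⊤) :
    lifetime S x = x j ↔ insert j A ∈ S ∧ A ∉ S :=
  ⟨fun heq => ⟨not_not.1 fun hjA => (lifetime_lt_of_insert_notMem hS h hbot hjA).ne heq,
      fun hA => (lt_lifetime_of_mem h htop hA).ne' heq⟩,
    fun ⟨hjA, hA⟩ => lifetime_eq_of_insert_mem_of_notMem hS h hjA hA⟩

end Lifetime

theorem isUpperSet_setOf_eq_one {φ : Finset ι → ℕ} (hφ01 : ∀ A, φ A ≤ 1) (hmono : Monotone φ) :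
    IsUpperSet {A | φ A = 1} :=
  fun _ B hAB hA => le_antisymm (hφ01 B) (hA ▸ hmono hAB)

theorem Nat.cast_sub_cast_eq_ite {R : Type*} [AddGroupWithOne R] {a b : ℕ} (hab : a ≤ b)
    (hb : b ≤ 1) : (b : R) - a = if b = 1 ∧ a ≠ 1 then 1 else 0 := by
  interval_cases b <;> interval_cases a <;> norm_num

theorem sum_powerset_mul_sub_eq_sum_powerset_insert {R : Type*} [CommRing R] [DecidableEq ι]
    {s : Finset ι} {j : ι} (hj : j ∉ s) (q f : Finset ι → R) :
    ∑ A ∈ s.powerset, q A * (f (insert j A) - f A)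
      = ∑ A ∈ (insert j s).powerset, (-1) ^ #({j} \ A) * q (A.erase j) * f A := by
  rw [sum_powerset_insert hj, ← sum_add_distrib]
  refine sum_congr rfl fun A hA => ?_
  have hjA : j ∉ A := fun h => hj (mem_powerset.1 hA h)
  have hjA' : {j} \ insert j A = ∅ :=
    sdiff_eq_empty_iff_subset.2 (singleton_subset_iff.2 (mem_insert_self j A))
  simp only [sdiff_eq_self_of_disjoint (disjoint_singleton_left.2 hjA), card_singleton,
    erase_eq_of_notMem hjA, hjA', card_empty, erase_insert hjA]
  ring

section Probability

variable {Ω : Type*} [MeasurableSpace Ω] {μ : Measure Ω}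

theorem measureReal_eq_sum_of_ae_partition {κ : Type*} [IsFiniteMeasure μ] {s : Finset κ}
    {E : κ → Set Ω} (hE : ∀ k, MeasurableSet (E k)) (hdisj : (s : Set κ).PairwiseDisjoint E)
    (hcover : ∀ᵐ ω ∂μ, ∃ k ∈ s, ω ∈ E k) {T : Set Ω} {p : κ → Prop} [DecidablePred p]
    (hT : ∀ k ∈ s, ∀ ω ∈ E k, ω ∈ T ↔ p k) :
    μ.real T = ∑ k ∈ s with p k, μ.real (E k) := by
  have hae : T =ᵐ[μ] ⋃ k ∈ s.filter p, E k := by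
    filter_upwards [hcover] with ω ⟨k, hk, hωk⟩
    refine propext ⟨fun hωT => ?_, fun hω => ?_⟩
    · exact Set.mem_biUnion (mem_filter.2 ⟨hk, (hT k hk ω hωk).1 hωT⟩) hωk
    · obtain ⟨k', hk', hωk'⟩ := Set.mem_iUnion₂.1 hω
      exact (hT k' (mem_filter.1 hk').1 ω hωk').2 (mem_filter.1 hk').2
  rw [measureReal_congr hae,
    measureReal_biUnion_finset (hdisj.subset (coe_subset.2 (filter_subset _ _))) fun k _ => hE k]

variable [Fintype ι] {X : ι → Ω → ℝ} {j : ι}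

theorem measurableSet_exactlyAbove (hX : ∀ i, Measurable (X i)) (A : Finset ι) :
    MeasurableSet {ω | ExactlyAbove (fun i => X i ω) j A} := by
  simp only [ExactlyAbove, Set.ofPred_and, Set.ofPred_forall]
  exact .inter (.iInter fun i => .iInter fun _ => .iInter fun _ => measurableSet_lt (hX i) (hX j))
    (.iInter fun i => .iInter fun _ => measurableSet_lt (hX j) (hX i))

theorem ae_exists_exactlyAbove [DecidableEq ι]
    (hties : ∀ i ≠ j, μ {ω | X i ω = X j ω} = 0) :
    ∀ᵐ ω ∂μ, ∃ A ∈ (univ.erase j).powerset, ExactlyAbove (fun i => X i ω) j A := by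
  have hsep : ∀ᵐ ω ∂μ, ∀ i ≠ j, X i ω ≠ X j ω := ae_all_iff.2 fun i => by
    rcases eq_or_ne i j with rfl | hij
    · exact .of_forall fun _ h => absurd rfl h
    · filter_upwards [measure_eq_zero_iff_ae_notMem.1 (hties i hij)] with ω hω _ using hω
  filter_upwards [hsep] with ω hω
  have h := exactlyAbove_filter_lt hω
  exact ⟨_, mem_powerset.2 (subset_erase.2 ⟨subset_univ _, h.notMem⟩), h⟩

theorem measureReal_lifetime_eq_sum [DecidableEq ι] [IsFiniteMeasure μ]
    (hX : ∀ i, Measurable (X i)) (hties : ∀ i ≠ j, μ {ω | X i ω = X j ω} = 0)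
    {S : Set (Finset ι)} (hS : IsUpperSet S) [DecidablePred (· ∈ S)] :
    μ.real {ω | lifetime S (fun i => (X i ω : EReal)) = X j ω}
      = ∑ A ∈ (univ.erase j).powerset with insert j A ∈ S ∧ A ∉ S,
          μ.real {ω | ExactlyAbove (fun i => X i ω) j A} :=
  measureReal_eq_sum_of_ae_partition (measurableSet_exactlyAbove hX)
    (fun _ _ _ _ hAB => Set.disjoint_left.2 fun _ hA hB => hAB (hA.eq hB))
    (ae_exists_exactlyAbove hties) fun _ _ _ hω =>
      lifetime_eq_iff hS (hω.comp (f := Real.toEReal) EReal.coe_strictMono)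
        (EReal.bot_lt_coe _) (EReal.coe_lt_top _)

theorem measureReal_lifetime_eq_sum_mul_sub [DecidableEq ι] [IsFiniteMeasure μ]
    (hX : ∀ i, Measurable (X i)) (hties : ∀ i ≠ j, μ {ω | X i ω = X j ω} = 0)
    {φ : Finset ι → ℕ} (hφ01 : ∀ A, φ A ≤ 1) (hmono : Monotone φ) :
    μ.real {ω | lifetime {A | φ A = 1} (fun i => (X i ω : EReal)) = X j ω}
      = ∑ A ∈ (univ.erase j).powerset,
          μ.real {ω | ExactlyAbove (fun i => X i ω) j A} * ((φ (insert j A) : ℝ) - φ A) := by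
  rw [measureReal_lifetime_eq_sum hX hties (isUpperSet_setOf_eq_one hφ01 hmono), sum_filter]
  refine sum_congr rfl fun A _ => ?_
  rw [Nat.cast_sub_cast_eq_ite (hmono (subset_insert j A)) (hφ01 _), mul_ite, mul_one, mul_zero]
  congr

end Probability

end

theorem barlow_proschan_stmt_1_general
    {Ω : Type*} [MeasureSpace Ω] [IsProbabilityMeasure (ℙ : Measure Ω)]
    {n : ℕ} (X : Fin n → Ω → ℝ) (hX : ∀ i, Measurable (X i))
    (hties : ∀ i j : Fin n, i ≠ j → (ℙ : Measure Ω) {ω | X i ω = X j ω} = 0)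
    (φ : Finset (Fin n) → ℕ) (hφ01 : ∀ A, φ A ≤ 1)
    (hmono : ∀ ⦃A B : Finset (Fin n)⦄, A ⊆ B → φ A ≤ φ B)
    (j : Fin n) :
    ((ℙ : Measure Ω) {ω |
        (⨆ (A : Finset (Fin n)) (_ : φ A = 1), ⨅ i ∈ A, (X i ω : EReal))
          = (X j ω : EReal)}).toReal
      = ∑ A ∈ (Finset.univ.erase j).powerset,
          ((ℙ : Measure Ω) {ω | (∀ i, i ∉ A → i ≠ j → X i ω < X j ω) ∧
              ∀ i ∈ A, X j ω < X i ω}).toReal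
            * ((φ (insert j A) : ℝ) - (φ A : ℝ))
    ∧ ((ℙ : Measure Ω) {ω |
        (⨆ (A : Finset (Fin n)) (_ : φ A = 1), ⨅ i ∈ A, (X i ω : EReal))
          = (X j ω : EReal)}).toReal
      = ∑ A ∈ (Finset.univ : Finset (Fin n)).powerset,
          (-1 : ℝ) ^ (({j} \ A : Finset (Fin n)).card)
            * ((ℙ : Measure Ω) {ω | (∀ i, i ∉ A.erase j → i ≠ j → X i ω < X j ω) ∧
                ∀ i ∈ A.erase j, X j ω < X i ω}).toReal
            * (φ A : ℝ) := by
  have h := measureReal_lifetime_eq_sum_mul_sub (μ := ℙ) hX (fun i hi => hties i j hi) hφ01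
    hmono (j := j)
  have hsign := sum_powerset_mul_sub_eq_sum_powerset_insert (notMem_erase j univ)
    (fun A => (ℙ : Measure Ω).real {ω | ExactlyAbove (fun i => X i ω) j A}) (fun A => (φ A : ℝ))
  rw [insert_erase (mem_univ j)] at hsign
  exact ⟨h, h.trans hsign⟩

theorem barlow_proschan_stmt_1
    {Ω : Type*} [MeasureSpace Ω] [IsProbabilityMeasure (ℙ : Measure Ω)]
    {n : ℕ} (X : Fin n → Ω → ℝ) (hX : ∀ i, Measurable (X i))
    (hties : ∀ i j : Fin n, i ≠ j → (ℙ : Measure Ω) {ω | X i ω = X j ω} = 0)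
    (φ : Finset (Fin n) → ℕ) (hφ01 : ∀ A, φ A ≤ 1)
    (hmono : ∀ ⦃A B : Finset (Fin n)⦄, A ⊆ B → φ A ≤ φ B)
    (hempty : φ ∅ = 0) (hfull : φ Finset.univ = 1)
    (j : Fin n) :
    ((ℙ : Measure Ω) {ω |
        (⨆ (A : Finset (Fin n)) (_ : φ A = 1), ⨅ i ∈ A, (X i ω : EReal))
          = (X j ω : EReal)}).toReal
      = ∑ A ∈ (Finset.univ.erase j).powerset,
          ((ℙ : Measure Ω) {ω | (∀ i, i ∉ A → i ≠ j → X i ω < X j ω) ∧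
              ∀ i ∈ A, X j ω < X i ω}).toReal
            * ((φ (insert j A) : ℝ) - (φ A : ℝ))
    ∧ ((ℙ : Measure Ω) {ω |
        (⨆ (A : Finset (Fin n)) (_ : φ A = 1), ⨅ i ∈ A, (X i ω : EReal))
          = (X j ω : EReal)}).toReal
      = ∑ A ∈ (Finset.univ : Finset (Fin n)).powerset,
          (-1 : ℝ) ^ (({j} \ A : Finset (Fin n)).card)
            * ((ℙ : Measure Ω) {ω | (∀ i, i ∉ A.erase j → i ≠ j → X i ω < X j ω) ∧
                ∀ i ∈ A.erase j, X j ω < X i ω}).toReal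
            * (φ A : ℝ) :=
  barlow_proschan_stmt_1_general X hX hties φ hφ01 hmono j
end

section
/- For every semicoherent structure function φ and every k ∈ [n], the k-th coordinate of the signature satisfies p_k = ℙ(T = X_{k:n}) = Σ_{A ⊆ [n]} m_φ(A)·ℙ(X_{k:n} = min_{i∈A} X_i). -/
open MeasureTheory ProbabilityTheory Finset

/-- The `k`-th order statistic (`k`-th smallest value) of `X 1 ω, …, X n ω`,
valued in `EReal` with the convention that the `0`-th order statistic is `−∞`. -/
noncomputable def orderStatE {Ω : Type*} {n : ℕ} (X : Fin n → Ω → ℝ) (k : ℕ) (ω : Ω) : EReal :=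
  sInf {t : EReal | k ≤ (Finset.univ.filter fun i => (X i ω : EReal) ≤ t).card}

/-! Fix component lifetimes `y` and a real level `u`, and let `U = {i | u ≤ y i}` and
`V = {i | u < y i}`. As `φ` is a monotone `0/1` function, `u ≤ T ↔ φ U = 1` and
`u < T ↔ φ V = 1`, so `𝟙[T = u] = φ U - φ V`. On the other side
`min_{i ∈ A} y i = u ↔ A ⊆ U ∧ ¬ A ⊆ V`, and Möbius inversion `∑_{A ⊆ W} m_φ A = φ W` turns
`∑_A m_φ A · 𝟙[u = min_{i ∈ A} y i]` into `φ U - φ V` as well. For `1 ≤ k ≤ n` the order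
statistic `X_{k:n} ω` is real, so taking `u = X_{k:n} ω` and integrating the pointwise identity
gives the formula. -/

section Moebius

variable {α R : Type*} [DecidableEq α] [CommRing R]

theorem Finset.sum_Icc_neg_one_pow_card_sub {B W : Finset α} (h : B ⊆ W) :
    ∑ A ∈ Icc B W, (-1 : R) ^ (#A - #B) = if B = W then 1 else 0 := by
  have hdisj : ∀ C ∈ (W \ B).powerset, Disjoint B C := fun C hC =>
    disjoint_sdiff.mono_right (mem_powerset.mp hC)
  rw [Icc_eq_image_powerset h, sum_image fun C hC D hD hCD => by
      rw [← union_sdiff_cancel_left (hdisj C hC), ← union_sdiff_cancel_left (hdisj D hD),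
        hCD]]
  calc ∑ C ∈ (W \ B).powerset, (-1 : R) ^ (#(B ∪ C) - #B)
      = ((∑ C ∈ (W \ B).powerset, (-1 : ℤ) ^ #C : ℤ) : R) := by
        push_cast
        exact sum_congr rfl fun C hC => by rw [card_union_of_disjoint (hdisj C hC),
          Nat.add_sub_cancel_left]
    _ = if B = W then 1 else 0 := by
        have hBW : W \ B = ∅ ↔ B = W := sdiff_eq_empty_iff_subset.trans h.ge_iff_eq
        simp [sum_powerset_neg_one_pow_card, hBW]

def moebiusTransform (f : Finset α → R) (A : Finset α) : R :=
  ∑ B ∈ A.powerset, (-1 : R) ^ (#A - #B) * f B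

theorem sum_powerset_moebiusTransform (f : Finset α → R) (W : Finset α) :
    ∑ A ∈ W.powerset, moebiusTransform f A = f W := by
  unfold moebiusTransform
  rw [sum_comm' (t' := W.powerset) (s' := fun B => Icc B W) fun A B => by
    simp only [mem_powerset, mem_Icc]
    exact ⟨fun h => ⟨⟨h.2, h.1⟩, h.2.trans h.1⟩, fun h => ⟨h.1.2, h.1.1⟩⟩]
  simp_rw [← sum_mul]
  rw [sum_congr rfl fun B hB => by rw [sum_Icc_neg_one_pow_card_sub (mem_powerset.mp hB)]]
  simp

end Moebius

section Lifetime

variable {ι : Type*} [Fintype ι] (y : ι → ℝ) (u : ℝ)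

theorem EReal.coe_le_biInf_coe_iff (A : Finset ι) :
    (u : EReal) ≤ ⨅ i ∈ A, (y i : EReal) ↔ A ⊆ ({i | u ≤ y i} : Finset ι) := by
  simp [subset_iff]

theorem EReal.coe_lt_biInf_coe_iff (A : Finset ι) :
    (u : EReal) < ⨅ i ∈ A, (y i : EReal) ↔ A ⊆ ({i | u < y i} : Finset ι) := by
  rw [← Finset.inf_eq_iInf, Finset.lt_inf_iff (coe_lt_top u)]
  simp [subset_iff]

theorem EReal.coe_eq_biInf_coe_iff (A : Finset ι) :
    (u : EReal) = ⨅ i ∈ A, (y i : EReal)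
      ↔ A ⊆ ({i | u ≤ y i} : Finset ι) ∧ ¬ A ⊆ ({i | u < y i} : Finset ι) := by
  rw [eq_iff_le_not_lt, coe_le_biInf_coe_iff, coe_lt_biInf_coe_iff]

section UpwardClosed

variable {P : Finset ι → Prop} (hP : ∀ ⦃A B⦄, A ⊆ B → P A → P B)
include hP

theorem EReal.coe_le_iSup_biInf_coe_iff :
    (u : EReal) ≤ ⨆ (A) (_ : P A), ⨅ i ∈ A, (y i : EReal) ↔ P {i | u ≤ y i} := by
  refine ⟨fun h => ?_, fun h =>
    le_iSup₂_of_le _ h ((coe_le_biInf_coe_iff y u _).2 subset_rfl)⟩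
  rw [← sup_univ_eq_iSup, Finset.le_sup_iff (bot_lt_coe u)] at h
  obtain ⟨A, -, hA⟩ := h
  by_cases hPA : P A
  · rw [iSup_pos hPA, coe_le_biInf_coe_iff] at hA
    exact hP hA hPA
  · simp [iSup_neg hPA] at hA

theorem EReal.coe_lt_iSup_biInf_coe_iff :
    (u : EReal) < ⨆ (A) (_ : P A), ⨅ i ∈ A, (y i : EReal) ↔ P {i | u < y i} := by
  simp only [lt_iSup_iff, coe_lt_biInf_coe_iff, exists_prop]
  exact ⟨fun ⟨A, hPA, hA⟩ => hP hA hPA, fun h => ⟨_, h, subset_rfl⟩⟩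

theorem EReal.iSup_biInf_coe_eq_coe_iff :
    ⨆ (A) (_ : P A), ⨅ i ∈ A, (y i : EReal) = u
      ↔ P {i | u ≤ y i} ∧ ¬ P {i | u < y i} := by
  rw [le_antisymm_iff, ← not_lt, coe_le_iSup_biInf_coe_iff y u hP,
    coe_lt_iSup_biInf_coe_iff y u hP, and_comm]

end UpwardClosed

theorem ite_iSup_biInf_eq_sum_moebiusTransform {φ : Finset ι → ℕ} (hφ01 : ∀ A, φ A ≤ 1)
    (hmono : Monotone φ) :
    (if ⨆ (A) (_ : φ A = 1), ⨅ i ∈ A, (y i : EReal) = u then (1 : ℝ) else 0)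
      = ∑ A ∈ (univ : Finset ι).powerset, moebiusTransform (fun B => (φ B : ℝ)) A
          * (if (u : EReal) = ⨅ i ∈ A, (y i : EReal) then 1 else 0) := by
  classical
  set U : Finset ι := {i | u ≤ y i}
  set V : Finset ι := {i | u < y i}
  have hVU : V ⊆ U := monotone_filter_right _ fun _ _ => le_of_lt
  have hind : ∀ A : Finset ι, (if (u : EReal) = ⨅ i ∈ A, (y i : EReal) then (1 : ℝ) else 0)
      = (if A ⊆ U then 1 else 0) - (if A ⊆ V then 1 else 0) := fun A => by
    simp only [EReal.coe_eq_biInf_coe_iff]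
    change (if A ⊆ U ∧ ¬ A ⊆ V then (1 : ℝ) else 0) = _
    by_cases hV : A ⊆ V
    · simp [hV, hV.trans hVU]
    · by_cases hU : A ⊆ U <;> simp [hU, hV]
  have hpow : ∀ W : Finset ι, {A ∈ (univ : Finset ι).powerset | A ⊆ W} = W.powerset :=
    fun W => by ext; simp
  simp only [hind, mul_sub, sum_sub_distrib, mul_boole, ← sum_filter, hpow,
    sum_powerset_moebiusTransform]
  have hup : ∀ ⦃A B : Finset ι⦄, A ⊆ B → φ A = 1 → φ B = 1 := fun A B hAB hA =>
    le_antisymm (hφ01 B) (hA ▸ hmono hAB)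
  simp only [EReal.iSup_biInf_coe_eq_coe_iff y u hup]
  have := hφ01 U; have := hφ01 V; have := hmono hVU
  interval_cases φ U <;> interval_cases φ V <;> simp

end Lifetime

section OrderStatistic

variable {Ω : Type*} {n : ℕ} (X : Fin n → Ω → ℝ) (k : ℕ)

theorem orderStatE_eq_iInf_iSup (ω : Ω) :
    orderStatE X k ω = ⨅ (T : Finset (Fin n)) (_ : #T = k), ⨆ i ∈ T, (X i ω : EReal) := by
  refine le_antisymm (le_iInf₂ fun T hT => sInf_le ?_) (le_sInf fun t ht => ?_)
  · rw [Set.mem_ofPred_eq, ← hT]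
    exact card_le_card fun i hi =>
      mem_filter.2 ⟨mem_univ i, le_biSup (fun i => (X i ω : EReal)) hi⟩
  · obtain ⟨T, hT, rfl⟩ := exists_subset_card_eq ht
    exact iInf₂_le_of_le T rfl (iSup₂_le fun i hi => (mem_filter.1 (hT hi)).2)

theorem measurable_orderStatE [MeasurableSpace Ω] (hX : ∀ i, Measurable (X i)) :
    Measurable (orderStatE X k) := by
  simp only [funext (orderStatE_eq_iInf_iSup X k)]
  fun_prop

theorem exists_orderStatE_eq_coe (hk1 : 1 ≤ k) (hkn : k ≤ n) (ω : Ω) :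
    ∃ u : ℝ, orderStatE X k ω = u := by
  have : Nonempty (Fin n) := ⟨⟨0, by omega⟩⟩
  obtain ⟨jmin, -, hmin⟩ := exists_min_image univ (X · ω) univ_nonempty
  obtain ⟨jmax, -, hmax⟩ := exists_max_image univ (X · ω) univ_nonempty
  have hle : orderStatE X k ω ≤ X jmax ω := sInf_le <| by
    rw [Set.mem_ofPred_eq,
      filter_true_of_mem fun i _ => EReal.coe_le_coe_iff.2 (hmax i (mem_univ i)),
      card_univ, Fintype.card_fin]
    exact hkn
  have hge : (X jmin ω : EReal) ≤ orderStatE X k ω := le_sInf fun t ht => by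
    by_contra! hlt
    have : (univ.filter fun i => (X i ω : EReal) ≤ t) = ∅ :=
      filter_false_of_mem fun i _ hi =>
        (hi.trans_lt hlt).not_ge (EReal.coe_le_coe_iff.2 (hmin i (mem_univ i)))
    simp [this] at ht
    omega
  exact ⟨(orderStatE X k ω).toReal, (EReal.coe_toReal (hle.trans_lt (EReal.coe_lt_top _)).ne
    ((EReal.bot_lt_coe _).trans_le hge).ne').symm⟩

end OrderStatistic

theorem MeasureTheory.measureReal_eq_sum_of_indicator_eq_sum {Ω ι : Type*}
    [MeasurableSpace Ω] {μ : Measure Ω} [IsFiniteMeasure μ] {E : Set Ω} {F : ι → Set Ω}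
    {s : Finset ι} (c : ι → ℝ)
    (hE : MeasurableSet E) (hF : ∀ i, MeasurableSet (F i))
    (h : ∀ ω, E.indicator 1 ω = ∑ i ∈ s, c i * (F i).indicator 1 ω) :
    μ.real E = ∑ i ∈ s, c i * μ.real (F i) := by
  have hint : ∀ i ∈ s, Integrable (fun ω => c i * (F i).indicator 1 ω) μ := fun i _ =>
    ((integrable_const 1).indicator (hF i)).const_mul (c i)
  rw [← integral_indicator_one hE, funext h, integral_finsetSum s hint]
  simp only [integral_const_mul, integral_indicator_one (hF _)]

theorem barlow_proschan_stmt_8_general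
    {Ω : Type*} [MeasureSpace Ω] [IsProbabilityMeasure (ℙ : Measure Ω)]
    {n : ℕ} (X : Fin n → Ω → ℝ) (hX : ∀ i, Measurable (X i))
    (φ : Finset (Fin n) → ℕ) (hφ01 : ∀ A, φ A ≤ 1)
    (hmono : ∀ ⦃A B : Finset (Fin n)⦄, A ⊆ B → φ A ≤ φ B)
    (k : ℕ) (hk1 : 1 ≤ k) (hkn : k ≤ n) :
    ((ℙ : Measure Ω) {ω |
        (⨆ (A : Finset (Fin n)) (_ : φ A = 1), ⨅ i ∈ A, (X i ω : EReal))
          = orderStatE X k ω}).toReal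
      = ∑ A ∈ (Finset.univ : Finset (Fin n)).powerset,
          (∑ B ∈ A.powerset, (-1 : ℝ) ^ (A.card - B.card) * (φ B : ℝ))
            * ((ℙ : Measure Ω) {ω |
                orderStatE X k ω = ⨅ i ∈ A, (X i ω : EReal)}).toReal := by
  have hos := measurable_orderStatE X k hX
  refine measureReal_eq_sum_of_indicator_eq_sum _ (measurableSet_eq_fun (by fun_prop) hos)
    (fun A => measurableSet_eq_fun hos (by fun_prop)) fun ω => ?_
  obtain ⟨u, hu⟩ := exists_orderStatE_eq_coe X k hk1 hkn ω
  simp only [Set.indicator_apply, Set.mem_ofPred_eq, hu, Pi.one_apply]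
  exact ite_iSup_biInf_eq_sum_moebiusTransform (X · ω) u hφ01 hmono

theorem barlow_proschan_stmt_8
    {Ω : Type*} [MeasureSpace Ω] [IsProbabilityMeasure (ℙ : Measure Ω)]
    {n : ℕ} (X : Fin n → Ω → ℝ) (hX : ∀ i, Measurable (X i))
    (hties : ∀ i j : Fin n, i ≠ j → (ℙ : Measure Ω) {ω | X i ω = X j ω} = 0)
    (φ : Finset (Fin n) → ℕ) (hφ01 : ∀ A, φ A ≤ 1)
    (hmono : ∀ ⦃A B : Finset (Fin n)⦄, A ⊆ B → φ A ≤ φ B)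
    (hempty : φ ∅ = 0) (hfull : φ Finset.univ = 1)
    (k : ℕ) (hk1 : 1 ≤ k) (hkn : k ≤ n) :
    ((ℙ : Measure Ω) {ω |
        (⨆ (A : Finset (Fin n)) (_ : φ A = 1), ⨅ i ∈ A, (X i ω : EReal))
          = orderStatE X k ω}).toReal
      = ∑ A ∈ (Finset.univ : Finset (Fin n)).powerset,
          (∑ B ∈ A.powerset, (-1 : ℝ) ^ (A.card - B.card) * (φ B : ℝ))
            * ((ℙ : Measure Ω) {ω |
                orderStatE X k ω = ⨅ i ∈ A, (X i ω : EReal)}).toReal :=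
  barlow_proschan_stmt_8_general X hX φ hφ01 hmono k hk1 hkn
end

section
/- For every k ∈ [n] and every nonempty A ⊆ [n], one has ℙ(X_{k:n} = min_{i∈A} X_i) = Σ_{B ⊇ A, |B| = n−k+1} q(B) − Σ_{B ⊇ A, |B| = n−k} q(B). -/
open MeasureTheory ProbabilityTheory Finset

/-!
Off a null set the lifetimes are pairwise distinct. For distinct values there is exactly one
set `B` of each size `m` whose members all outlive the others, and it contains `A` iff it contains
the minimiser `a` of the lifetimes on `A`, i.e. iff `n + 1 ≤ m + r`, where `r` is the rank of `a`.
Since `X_{k:n} = min_{i∈A} X_i` exactly when `r = k`, the event in question is, almost surely,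
"such a `B ⊇ A` of size `n - k + 1` exists" minus the smaller event "such a `B ⊇ A` of size `n - k`
exists". For a fixed size these events are disjoint over `B`, so each has probability `∑ q(B)`.
-/

/-- `q(B)` is the probability of `{ω | IsTopSet (X · ω) B}`. -/
def IsTopSet {ι α : Type*} [LinearOrder α] (f : ι → α) (B : Finset ι) : Prop :=
  ∀ i ∉ B, ∀ l ∈ B, f i < f l

section TopSet

variable {ι α : Type*} [LinearOrder α] {f : ι → α} {B B' : Finset ι}

theorem IsTopSet.subset_or_subset (hB : IsTopSet f B) (hB' : IsTopSet f B') :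
    B ⊆ B' ∨ B' ⊆ B := by
  by_contra! h
  obtain ⟨⟨i, hiB, hiB'⟩, ⟨l, hlB', hlB⟩⟩ := And.intro (not_subset.1 h.1) (not_subset.1 h.2)
  exact (hB l hlB i hiB).asymm (hB' i hiB' l hlB')

theorem IsTopSet.eq_of_card_eq (hB : IsTopSet f B) (hB' : IsTopSet f B') (h : #B = #B') :
    B = B' :=
  (hB.subset_or_subset hB').elim (fun hs => eq_of_subset_of_card_le hs h.ge)
    fun hs => (eq_of_subset_of_card_le hs h.le).symm

theorem IsTopSet.exists_insert [Fintype ι] [DecidableEq ι] (hf : Function.Injective f)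
    (hB : IsTopSet f B) (hne : Bᶜ.Nonempty) : ∃ j ∉ B, IsTopSet f (insert j B) := by
  obtain ⟨j, hj, hmax⟩ := Bᶜ.exists_max_image f hne
  refine ⟨j, mem_compl.1 hj, fun i hi l hl => ?_⟩
  rw [mem_insert, not_or] at hi
  rcases mem_insert.1 hl with rfl | hlB
  · exact (hmax i (mem_compl.2 hi.2)).lt_of_ne (hf.ne hi.1)
  · exact hB i hi.2 l hlB

variable [Fintype ι]

theorem isTopSet_filter_le (f : ι → α) (a : ι) : IsTopSet f {j | f a ≤ f j} := by
  intro i hi l hl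
  simp only [mem_filter, mem_univ, true_and, not_le] at hi hl
  exact hi.trans_le hl

theorem IsTopSet.filter_le_subset (hB : IsTopSet f B) {a : ι} (ha : a ∈ B) :
    ({j | f a ≤ f j} : Finset ι) ⊆ B := fun j hj =>
  by_contra fun hjB => (hB j hjB a ha).not_ge (mem_filter.1 hj).2


def valueRank (f : ι → α) (i : ι) : ℕ := #{j | f j ≤ f i}

theorem valueRank_mem_Icc (f : ι → α) (i : ι) : valueRank f i ∈ Icc 1 (Fintype.card ι) :=
  mem_Icc.2 ⟨card_pos.2 ⟨i, by simp⟩, card_le_univ _⟩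

theorem valueRank_lt_valueRank {i j : ι} (h : f i < f j) : valueRank f i < valueRank f j := by
  refine card_lt_card ((ssubset_iff_of_subset fun l hl => ?_).2 ⟨j, by simp, by simpa using h⟩)
  simp only [mem_filter, mem_univ, true_and] at hl ⊢
  exact hl.trans h.le

theorem valueRank_injective (hf : Function.Injective f) : Function.Injective (valueRank f) := by
  intro i j h
  refine hf (le_antisymm ?_ ?_) <;> refine not_lt.1 fun hlt => ?_
  · exact (valueRank_lt_valueRank hlt).ne h.symm
  · exact (valueRank_lt_valueRank hlt).ne h

theorem exists_valueRank_eq (hf : Function.Injective f) {k : ℕ}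
    (hk : k ∈ Icc 1 (Fintype.card ι)) : ∃ i, valueRank f i = k := by
  obtain ⟨i, -, hi⟩ := surjOn_of_injOn_of_card_le (s := univ) (valueRank f)
    (fun i _ => valueRank_mem_Icc f i) (valueRank_injective hf).injOn (by simp) hk
  exact ⟨i, hi⟩

theorem card_filter_le_add_valueRank (hf : Function.Injective f) (i : ι) :
    #{j | f i ≤ f j} + valueRank f i = Fintype.card ι + 1 := by
  classical
  have hunion : univ.filter (f i ≤ f ·) ∪ univ.filter (f · ≤ f i) = univ := by
    ext j; simp [le_total]
  have hinter : univ.filter (f i ≤ f ·) ∩ univ.filter (f · ≤ f i) = {i} := by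
    ext j; simp [← le_antisymm_iff, hf.eq_iff, eq_comm]
  rw [valueRank, ← card_union_add_card_inter, hunion, hinter, card_univ, card_singleton]

theorem exists_isTopSet_superset_card_iff (hf : Function.Injective f) {A : Finset ι} {a : ι}
    (ha : a ∈ A) (hmin : ∀ b ∈ A, f a ≤ f b) {m : ℕ} (hm : m ≤ Fintype.card ι) :
    (∃ B, A ⊆ B ∧ #B = m ∧ IsTopSet f B) ↔ Fintype.card ι + 1 ≤ m + valueRank f a := by
  classical
  constructor
  · rintro ⟨B, hAB, rfl, hB⟩
    have := card_le_card (hB.filter_le_subset (hAB ha))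
    have := card_filter_le_add_valueRank hf a
    omega
  · intro hle
    have ha_mem := mem_Icc.1 (valueRank_mem_Icc f a)
    obtain ⟨i, hi⟩ := exists_valueRank_eq hf (k := Fintype.card ι + 1 - m) (by simp; omega)
    have hia : f i ≤ f a := not_lt.1 fun hlt => by
      have := valueRank_lt_valueRank hlt
      omega
    refine ⟨({j | f i ≤ f j} : Finset ι), fun b hb => ?_, ?_, isTopSet_filter_le f i⟩
    · simpa using hia.trans (hmin b hb)
    · have := card_filter_le_add_valueRank hf i
      omega

theorem exists_isTopSet_superset_card_succ (hf : Function.Injective f)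
    {A : Finset ι} {m : ℕ} (hm : m < Fintype.card ι)
    (h : ∃ B, A ⊆ B ∧ #B = m ∧ IsTopSet f B) : ∃ B, A ⊆ B ∧ #B = m + 1 ∧ IsTopSet f B := by
  classical
  obtain ⟨B, hAB, rfl, hB⟩ := h
  obtain ⟨j, hj, hjB⟩ := hB.exists_insert hf (card_pos.1 (by rw [card_compl]; omega))
  exact ⟨insert j B, hAB.trans (subset_insert j B), card_insert_of_notMem hj, hjB⟩

end TopSet

section OrderStatistic

variable {Ω : Type*} {n : ℕ} {X : Fin n → Ω → ℝ} {ω : Ω}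

theorem orderStatE_eq_of_valueRank_eq {k : ℕ} {i : Fin n} (h : valueRank (X · ω) i = k) :
    orderStatE X k ω = X i ω := by
  have hcoe : ∀ x : ℝ, #{j | (X j ω : EReal) ≤ x} = #{j | X j ω ≤ x} := fun x => by
    simp only [EReal.coe_le_coe_iff]
  refine IsLeast.csInf_eq ⟨(hcoe _).trans h |>.ge, fun t ht => not_lt.1 fun hlt => ?_⟩
  have hsub : univ.filter (fun j => (X j ω : EReal) ≤ t) ⊂ univ.filter (X · ω ≤ X i ω) := by
    refine (ssubset_iff_of_subset fun j hj => ?_).2 ⟨i, by simp, by simpa using hlt⟩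
    simp only [mem_filter, mem_univ, true_and] at hj ⊢
    exact_mod_cast (hj.trans_lt hlt).le
  exact (card_lt_card hsub).not_ge (h.trans_le ht)

theorem orderStatE_eq_iff (hinj : Function.Injective (X · ω)) {k : ℕ} (hk : k ∈ Icc 1 n)
    (a : Fin n) : orderStatE X k ω = X a ω ↔ valueRank (X · ω) a = k := by
  refine ⟨fun h => ?_, orderStatE_eq_of_valueRank_eq⟩
  obtain ⟨i, hi⟩ := exists_valueRank_eq hinj (by simpa using hk)
  rw [orderStatE_eq_of_valueRank_eq hi, EReal.coe_eq_coe_iff] at h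
  rwa [← hinj h]

theorem orderStatE_eq_iInf_iff (hinj : Function.Injective (X · ω)) {k : ℕ} (hk : k ∈ Icc 1 n)
    {A : Finset (Fin n)} (hA : A.Nonempty) :
    orderStatE X k ω = ⨅ i ∈ A, (X i ω : EReal) ↔
      (∃ B, A ⊆ B ∧ #B = n - k + 1 ∧ IsTopSet (X · ω) B) ∧
        ¬ ∃ B, A ⊆ B ∧ #B = n - k ∧ IsTopSet (X · ω) B := by
  obtain ⟨a, ha, hmin⟩ := A.exists_min_image (X · ω) hA
  have hinf : ⨅ i ∈ A, (X i ω : EReal) = X a ω :=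
    le_antisymm (iInf₂_le a ha) (le_iInf₂ fun i hi => EReal.coe_le_coe_iff.2 (hmin i hi))
  have hk' := mem_Icc.1 hk
  rw [hinf, orderStatE_eq_iff hinj hk,
    exists_isTopSet_superset_card_iff hinj ha hmin (by rw [Fintype.card_fin]; omega),
    exists_isTopSet_superset_card_iff hinj ha hmin (by rw [Fintype.card_fin]; omega),
    Fintype.card_fin]
  omega

end OrderStatistic

theorem setOf_exists_isTopSet {Ω ι α : Type*} [LinearOrder α] (X : ι → Ω → α)
    (s : Finset (Finset ι)) :
    {ω | ∃ B ∈ s, IsTopSet (X · ω) B} = ⋃ B ∈ s, {ω | IsTopSet (X · ω) B} := by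
  ext; simp

section Measure

variable {Ω ι : Type*} [MeasurableSpace Ω] {μ : Measure Ω}

theorem ae_injective_of_measure_eq_zero [Countable ι] {β : Type*} {X : ι → Ω → β}
    (h : ∀ i j, i ≠ j → μ {ω | X i ω = X j ω} = 0) : ∀ᵐ ω ∂μ, Function.Injective (X · ω) := by
  refine ae_all_iff.2 fun i => ae_all_iff.2 fun j => ?_
  by_cases hij : i = j
  · exact Filter.Eventually.of_forall fun _ _ => hij
  · filter_upwards [measure_eq_zero_iff_ae_notMem.1 (h i j hij)] with ω hω heq
    exact absurd heq hω

theorem measure_sdiff_of_ae_le {s t : Set Ω} (h : t ≤ᵐ[μ] s) (ht : NullMeasurableSet t μ)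
    (hfin : μ t ≠ ⊤) : μ (s \ t) = μ s - μ t := by
  rw [measure_sdiff' s ht hfin, measure_congr (union_ae_eq_left_iff_ae_subset.2 h)]

variable [Countable ι] {X : ι → Ω → ℝ}

theorem measurableSet_isTopSet (hX : ∀ i, Measurable (X i)) (B : Finset ι) :
    MeasurableSet {ω | IsTopSet (X · ω) B} := by
  simp only [IsTopSet, Set.ofPred_forall]
  exact .iInter fun i => .iInter fun _ => .iInter fun l => .iInter fun _ =>
    measurableSet_lt (hX i) (hX l)

theorem measurableSet_exists_isTopSet (hX : ∀ i, Measurable (X i)) (s : Finset (Finset ι)) :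
    MeasurableSet {ω | ∃ B ∈ s, IsTopSet (X · ω) B} := by
  rw [setOf_exists_isTopSet]
  exact s.measurableSet_biUnion fun B _ => measurableSet_isTopSet hX B

theorem measure_exists_isTopSet (hX : ∀ i, Measurable (X i)) {s : Finset (Finset ι)} {m : ℕ}
    (hs : ∀ B ∈ s, #B = m) :
    μ {ω | ∃ B ∈ s, IsTopSet (X · ω) B} = ∑ B ∈ s, μ {ω | IsTopSet (X · ω) B} := by
  rw [setOf_exists_isTopSet]
  refine measure_biUnion_finset (fun B hB B' hB' hne => Set.disjoint_left.2 fun ω hω hω' => ?_)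
    fun B _ => measurableSet_isTopSet hX B
  exact hne (IsTopSet.eq_of_card_eq hω hω' ((hs B hB).trans (hs B' hB').symm))

end Measure

theorem barlow_proschan_stmt_9
    {Ω : Type*} [MeasureSpace Ω] [IsProbabilityMeasure (ℙ : Measure Ω)]
    {n : ℕ} (X : Fin n → Ω → ℝ) (hX : ∀ i, Measurable (X i))
    (hties : ∀ i j : Fin n, i ≠ j → (ℙ : Measure Ω) {ω | X i ω = X j ω} = 0)
    (k : ℕ) (hk1 : 1 ≤ k) (hkn : k ≤ n)
    (A : Finset (Fin n)) (hA : A.Nonempty) :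
    ((ℙ : Measure Ω) {ω | orderStatE X k ω = ⨅ i ∈ A, (X i ω : EReal)}).toReal
      = ∑ B ∈ (Finset.univ : Finset (Fin n)).powerset.filter
            (fun B => A ⊆ B ∧ B.card = n - k + 1),
          ((ℙ : Measure Ω) {ω | ∀ i, i ∉ B → ∀ l ∈ B, X i ω < X l ω}).toReal
      - ∑ B ∈ (Finset.univ : Finset (Fin n)).powerset.filter
            (fun B => A ⊆ B ∧ B.card = n - k),
          ((ℙ : Measure Ω) {ω | ∀ i, i ∉ B → ∀ l ∈ B, X i ω < X l ω}).toReal := by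
  set T : ℕ → Set Ω := fun m => {ω | ∃ B ∈ (Finset.univ : Finset (Fin n)).powerset.filter
    (fun B => A ⊆ B ∧ B.card = m), IsTopSet (X · ω) B}
  have hT : ∀ m ω, ω ∈ T m ↔ ∃ B, A ⊆ B ∧ #B = m ∧ IsTopSet (X · ω) B := by
    simp [T, and_assoc]
  have hinj := ae_injective_of_measure_eq_zero hties
  have hevent : {ω | orderStatE X k ω = ⨅ i ∈ A, (X i ω : EReal)} =ᵐ[ℙ]
      (T (n - k + 1) \ T (n - k) : Set Ω) := by
    refine Filter.eventuallyEq_set.2 ?_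
    filter_upwards [hinj] with ω hω
    rw [Set.mem_sdiff, hT, hT]
    exact orderStatE_eq_iInf_iff hω (mem_Icc.2 ⟨hk1, hkn⟩) hA
  have hmono : T (n - k) ≤ᵐ[ℙ] T (n - k + 1) := by
    filter_upwards [hinj] with ω hω hmem
    exact (hT _ ω).2 <| exists_isTopSet_superset_card_succ hω
      (by rw [Fintype.card_fin]; omega) ((hT _ ω).1 hmem)
  have hsum m := measure_exists_isTopSet (μ := ℙ) hX
    (s := (Finset.univ : Finset (Fin n)).powerset.filter (fun B => A ⊆ B ∧ B.card = m))
    (fun B hB => (mem_filter.1 hB).2.2)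
  rw [measure_congr hevent, measure_sdiff_of_ae_le hmono
      (measurableSet_exists_isTopSet hX _).nullMeasurableSet (measure_ne_top _ _),
    ENNReal.toReal_sub_of_le (measure_mono_ae hmono) (measure_ne_top _ _), hsum, hsum,
    ENNReal.toReal_sum fun _ _ => measure_ne_top _ _,
    ENNReal.toReal_sum fun _ _ => measure_ne_top _ _]
  rfl
end

section
/- If the component lifetimes X_1,…,X_n are exchangeable (the joint law of (X_{σ(1)},…,X_{σ(n)}) equals that of (X_1,…,X_n) for every permutation σ of [n]) and have no ties, then for every semicoherent structure function φ and every j ∈ [n], ℙ(T = X_j) = b_j, where b_j is the Shapley–Shubik structural importance. -/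
/-!
Write `U_j(x)` for the set of components outliving component `j`. When there are no ties, the
system dies exactly at `X_j` iff `U_j ∪ {j}` still contains a path set and `U_j` does not, i.e.
iff `U_j(X)` is a set `A ∌ j` at which `j` is critical. By exchangeability, `ℙ(U_j(X) = A)` depends
only on `|A| = k`. For fixed `k` the events `U_i(X) = B` with `i ∉ B`, `|B| = k` partition `Ω` up
to a null set (exactly one component is outlived by exactly `k` others), and there are
`n·C(n-1,k)` of them, so each has probability `1/(n·C(n-1,k))`. Summing over the critical sets gives `b_j`.
-/

open MeasureTheory ProbabilityTheory Finset

namespace Reliability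

variable {ι : Type*} [Fintype ι]

noncomputable def outlivers (x : ι → ℝ) (j : ι) : Finset ι := {i | x j < x i}

/-- The lifetime of the system whose path sets are the `A` with `P A`. -/
noncomputable def lifetime (P : Finset ι → Prop) (x : ι → ℝ) : EReal :=
  ⨆ (A) (_ : P A), ⨅ i ∈ A, (x i : EReal)

lemma card_outlivers_lt (x : ι → ℝ) (j : ι) : #(outlivers x j) < Fintype.card ι :=
  card_lt_univ_of_notMem (x := j) (by simp [outlivers])

lemma card_outlivers_lt_of_lt {x : ι → ℝ} {i i' : ι} (h : x i < x i') :
    #(outlivers x i') < #(outlivers x i) := by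
  refine card_lt_card ((ssubset_iff_of_subset fun l hl => ?_).2 ⟨i', by simp [outlivers, h]⟩)
  simp only [outlivers, mem_filter, mem_univ, true_and] at hl ⊢
  exact h.trans hl

lemma injective_card_outlivers {x : ι → ℝ} (hx : Function.Injective x) :
    Function.Injective fun i => #(outlivers x i) := by
  intro i i' h
  by_contra hne
  rcases (hx.ne hne).lt_or_gt with hlt | hlt
  · exact (card_outlivers_lt_of_lt hlt).ne' h
  · exact (card_outlivers_lt_of_lt hlt).ne h

lemma exists_card_outlivers_eq {x : ι → ℝ} (hx : Function.Injective x) {k : ℕ}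
    (hk : k < Fintype.card ι) : ∃ i, #(outlivers x i) = k := by
  have himage : univ.image (fun i => #(outlivers x i)) = range (Fintype.card ι) := by
    refine eq_of_subset_of_card_le (fun m hm => ?_) ?_
    · obtain ⟨i, -, rfl⟩ := mem_image.1 hm
      exact mem_range.2 (card_outlivers_lt x i)
    · rw [card_image_of_injective _ (injective_card_outlivers hx), card_range, card_univ]
  obtain ⟨i, -, hi⟩ := mem_image.1 (himage ▸ mem_range.2 hk)
  exact ⟨i, hi⟩

lemma lifetime_eq_sup (P : Finset ι → Prop) [DecidablePred P] (x : ι → ℝ) :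
    lifetime P x = (univ.filter P).sup fun A => A.inf fun i => (x i : EReal) := by
  simp [lifetime, Finset.sup_eq_iSup, Finset.inf_eq_iInf]

lemma coe_lt_lifetime_iff {P : Finset ι → Prop} (hP : IsUpperSet {A | P A}) (x : ι → ℝ) (t : ℝ) :
    (t : EReal) < lifetime P x ↔ P {i | t < x i} := by
  classical
  simp only [lifetime_eq_sup, Finset.lt_sup_iff, Finset.lt_inf_iff (EReal.coe_lt_top t),
    mem_filter, mem_univ, true_and, EReal.coe_lt_coe_iff]
  exact ⟨fun ⟨A, hA, hlt⟩ => hP (fun i hi => by simpa using hlt i hi) hA,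
    fun h => ⟨_, h, fun i hi => by simpa using hi⟩⟩

lemma coe_le_lifetime_iff {P : Finset ι → Prop} (hP : IsUpperSet {A | P A}) (x : ι → ℝ) (t : ℝ) :
    (t : EReal) ≤ lifetime P x ↔ P {i | t ≤ x i} := by
  classical
  simp only [lifetime_eq_sup, Finset.le_sup_iff (EReal.bot_lt_coe t), Finset.le_inf_iff,
    mem_filter, mem_univ, true_and, EReal.coe_le_coe_iff]
  exact ⟨fun ⟨A, hA, hle⟩ => hP (fun i hi => by simpa using hle i hi) hA,
    fun h => ⟨_, h, fun i hi => by simpa using hi⟩⟩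

lemma measurable_lifetime (P : Finset ι → Prop) : Measurable (lifetime P) :=
  .iSup fun _ => .iSup fun _ => .iInf fun i => .iInf fun _ => (measurable_pi_apply i).coe_real_ereal

lemma measurableSet_outlivers_eq (j : ι) (A : Finset ι) :
    MeasurableSet ((outlivers · j) ⁻¹' {A}) := by
  have : (outlivers · j) ⁻¹' {A} = ⋂ i, {x : ι → ℝ | x j < x i ↔ i ∈ A} := by
    ext x
    simp [outlivers, Finset.ext_iff]
  rw [this]
  refine .iInter fun i => measurableSet_setOfPred.2 (Measurable.iff ?_ measurable_const)
  exact measurableSet_setOfPred.1 (measurableSet_lt (measurable_pi_apply j) (measurable_pi_apply i))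

lemma ae_injective {μ : Measure (ι → ℝ)} (hties : ∀ i j, i ≠ j → μ {x | x i = x j} = 0) :
    ∀ᵐ x ∂μ, Function.Injective x := by
  refine Filter.eventually_all.2 fun i => Filter.eventually_all.2 fun j => ?_
  by_cases hij : i = j
  · exact .of_forall fun _ _ => hij
  · exact measure_mono_null (fun x hx => by simpa [hij] using hx) (hties i j hij)

variable [DecidableEq ι]

def criticalSets (P : Finset ι → Prop) [DecidablePred P] (j : ι) : Finset (Finset ι) :=
  {A ∈ (univ.erase j).powerset | P (insert j A) ∧ ¬ P A}

lemma outlivers_subset_erase (x : ι → ℝ) (j : ι) : outlivers x j ⊆ univ.erase j := by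
  intro i hi
  simp only [outlivers, mem_filter, mem_univ, true_and] at hi
  exact mem_erase.2 ⟨fun h => (h ▸ hi).false, mem_univ i⟩

lemma filter_le_eq_insert_outlivers {x : ι → ℝ} (hx : Function.Injective x) (j : ι) :
    ({i | x j ≤ x i} : Finset ι) = insert j (outlivers x j) := by
  ext i
  simp [outlivers, le_iff_lt_or_eq, hx.eq_iff, eq_comm, or_comm]

lemma lifetime_eq_iff {P : Finset ι → Prop} (hP : IsUpperSet {A | P A}) {x : ι → ℝ}
    (hx : Function.Injective x) (j : ι) :
    lifetime P x = x j ↔ P (insert j (outlivers x j)) ∧ ¬ P (outlivers x j) := by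
  rw [eq_comm, eq_iff_le_not_lt, coe_le_lifetime_iff hP, coe_lt_lifetime_iff hP,
    filter_le_eq_insert_outlivers hx]
  rfl

lemma image_outlivers_comp_perm (x : ι → ℝ) (σ : Equiv.Perm ι) (j : ι) :
    (outlivers (x ∘ σ) j).image σ = outlivers x (σ j) := by
  ext i
  rw [← σ.apply_symm_apply i, σ.injective.mem_finset_image]
  simp [outlivers]

lemma exists_perm_apply_eq_and_image_eq {j j' : ι} {A B : Finset ι} (hj : j ∉ A) (hj' : j' ∉ B)
    (h : #A = #B) : ∃ σ : Equiv.Perm ι, σ j = j' ∧ A.image σ = B := by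
  let τ : Equiv.Perm ι := (equivOfCardEq h).extendSubtype
  have hτA : A.image τ = B := eq_of_subset_of_card_le
    (image_subset_iff.2 fun a ha => (equivOfCardEq h).extendSubtype_mem a ha)
    (by rw [card_image_of_injective _ τ.injective, h])
  have hτj : τ j ∉ B := by rwa [← hτA, τ.injective.mem_finset_image]
  refine ⟨Equiv.swap (τ j) j' * τ, Equiv.swap_apply_left _ _, ?_⟩
  rw [Equiv.Perm.coe_mul, ← image_image, hτA]
  refine (image_congr fun b hb => ?_).trans image_id
  exact Equiv.swap_apply_of_ne_of_ne (ne_of_mem_of_not_mem hb hτj) (ne_of_mem_of_not_mem hb hj')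

variable {μ : Measure (ι → ℝ)}

lemma measure_outlivers_eq_perm (hperm : ∀ σ : Equiv.Perm ι, μ.map (· ∘ σ) = μ)
    (σ : Equiv.Perm ι) (j : ι) (A : Finset ι) :
    μ ((outlivers · j) ⁻¹' {A}) = μ ((outlivers · (σ j)) ⁻¹' {A.image σ}) := by
  have hσ : Measurable fun x : ι → ℝ => x ∘ σ := by fun_prop
  conv_lhs => rw [← hperm σ, Measure.map_apply hσ (measurableSet_outlivers_eq j A)]
  congr 1
  ext x
  simp only [Set.mem_preimage, Set.mem_singleton_iff, ← image_outlivers_comp_perm]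
  exact (image_injective σ.injective).eq_iff.symm

lemma sum_measure_outlivers_eq_one [IsProbabilityMeasure μ]
    (hties : ∀ i j, i ≠ j → μ {x | x i = x j} = 0) {k : ℕ} (hk : k < Fintype.card ι) :
    ∑ p ∈ univ.sigma fun j => (univ.erase j).powersetCard k,
      μ ((outlivers · p.1) ⁻¹' {p.2}) = 1 := by
  have hinj := ae_iff.1 (ae_injective hties)
  rw [← measure_biUnion_finset₀ ?disjoint
    fun p _ => (measurableSet_outlivers_eq _ _).nullMeasurableSet]
  case disjoint =>
    rintro ⟨i, A⟩ hiA ⟨i', A'⟩ hiA' hne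
    refine measure_mono_null ?_ hinj
    rintro x ⟨hxA, hxA'⟩ hx
    simp only [Set.mem_preimage, Set.mem_singleton_iff] at hxA hxA'
    simp only [coe_sigma, Set.mem_sigma_iff, mem_coe, mem_powersetCard] at hiA hiA'
    obtain rfl : i = i' := injective_card_outlivers hx <| by
      simp only [hxA, hxA', hiA.2.2, hiA'.2.2]
    rw [← hxA, ← hxA'] at hne
    exact hne rfl
  refine (measure_congr (ae_eq_univ.2 (measure_mono_null ?_ hinj))).trans measure_univ
  intro x hx hx'
  obtain ⟨i, hi⟩ := exists_card_outlivers_eq hx' hk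
  exact hx (Set.mem_biUnion (x := ⟨i, outlivers x i⟩)
    (by simp [outlivers_subset_erase, hi]) (Set.mem_singleton _))

lemma measure_outlivers_eq [IsProbabilityMeasure μ]
    (hperm : ∀ σ : Equiv.Perm ι, μ.map (· ∘ σ) = μ)
    (hties : ∀ i j, i ≠ j → μ {x | x i = x j} = 0) {j : ι} {A : Finset ι} (hjA : j ∉ A) :
    μ ((outlivers · j) ⁻¹' {A}) =
      ((Fintype.card ι : ENNReal) * (Fintype.card ι - 1).choose #A)⁻¹ := by
  have hsame : ∀ p ∈ univ.sigma fun i => (univ.erase i).powersetCard #A,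
      μ ((outlivers · p.1) ⁻¹' {p.2}) = μ ((outlivers · j) ⁻¹' {A}) := by
    rintro ⟨i, B⟩ hiB
    simp only [mem_sigma, mem_univ, mem_powersetCard, subset_erase, true_and] at hiB
    obtain ⟨σ, rfl, rfl⟩ := exists_perm_apply_eq_and_image_eq hjA hiB.1.2 hiB.2.symm
    exact (measure_outlivers_eq_perm hperm σ j A).symm
  refine ENNReal.eq_inv_of_mul_eq_one_left ?_
  rw [← sum_measure_outlivers_eq_one hties (card_lt_univ_of_notMem hjA), sum_congr rfl hsame,
    sum_const, card_sigma]
  simp [mul_comm]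

lemma lifetime_ae_eq {P : Finset ι → Prop} [DecidablePred P] (hP : IsUpperSet {A | P A})
    (hties : ∀ i j, i ≠ j → μ {x | x i = x j} = 0) (j : ι) :
    {x | lifetime P x = x j} =ᵐ[μ] (outlivers · j) ⁻¹' ↑(criticalSets P j) := by
  rw [Filter.eventuallyEq_set]
  filter_upwards [ae_injective hties] with x hx
  simp [lifetime_eq_iff hP hx, criticalSets, outlivers_subset_erase]

theorem measure_lifetime_eq [IsProbabilityMeasure μ]
    (hperm : ∀ σ : Equiv.Perm ι, μ.map (· ∘ σ) = μ)
    (hties : ∀ i j, i ≠ j → μ {x | x i = x j} = 0)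
    {P : Finset ι → Prop} [DecidablePred P] (hP : IsUpperSet {A | P A}) (j : ι) :
    μ {x | lifetime P x = x j} = ∑ A ∈ criticalSets P j,
      ((Fintype.card ι : ENNReal) * (Fintype.card ι - 1).choose #A)⁻¹ := by
  rw [measure_congr (lifetime_ae_eq hP hties j),
    ← sum_measure_preimage_singleton _ fun A _ => measurableSet_outlivers_eq j A]
  refine sum_congr rfl fun A hA => measure_outlivers_eq hperm hties fun hjA => ?_
  simp only [criticalSets, mem_filter, mem_powerset, subset_erase] at hA
  exact hA.1.2 hjA

end Reliability

open Reliability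

theorem barlow_proschan_stmt_11_general
    {Ω : Type*} [MeasureSpace Ω] [IsProbabilityMeasure (ℙ : Measure Ω)]
    {n : ℕ} (X : Fin n → Ω → ℝ) (hX : ∀ i, Measurable (X i))
    (hexch : ∀ σ : Equiv.Perm (Fin n),
      Measure.map (fun ω i => X (σ i) ω) (ℙ : Measure Ω)
        = Measure.map (fun ω i => X i ω) (ℙ : Measure Ω))
    (hties : ∀ i j : Fin n, i ≠ j → (ℙ : Measure Ω) {ω | X i ω = X j ω} = 0)
    (φ : Finset (Fin n) → ℕ) (hφ01 : ∀ A, φ A ≤ 1)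
    (hmono : ∀ ⦃A B : Finset (Fin n)⦄, A ⊆ B → φ A ≤ φ B)
    (j : Fin n) :
    ((ℙ : Measure Ω) {ω |
        (⨆ (A : Finset (Fin n)) (_ : φ A = 1), ⨅ i ∈ A, (X i ω : EReal))
          = (X j ω : EReal)}).toReal
      = ∑ A ∈ (Finset.univ.erase j).powerset,
          ((φ (insert j A) : ℝ) - (φ A : ℝ)) / (n * (n - 1).choose A.card) := by
  have hXv : Measurable fun ω i => X i ω := measurable_pi_lambda _ hX
  set μ := (ℙ : Measure Ω).map fun ω i => X i ω
  have : IsProbabilityMeasure μ := Measure.isProbabilityMeasure_map hXv.aemeasurable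
  have hperm : ∀ σ : Equiv.Perm (Fin n), μ.map (· ∘ σ) = μ := fun σ => by
    rw [Measure.map_map (by fun_prop) hXv]
    exact hexch σ
  have hties' : ∀ i i', i ≠ i' → μ {x | x i = x i'} = 0 := fun i i' h => by
    rw [Measure.map_apply hXv (measurableSet_eq_fun (by fun_prop) (by fun_prop))]
    exact hties i i' h
  have hP : IsUpperSet {A | φ A = 1} := fun A B h hA => le_antisymm (hφ01 B) (hA ▸ hmono h)
  have hT : MeasurableSet {x : Fin n → ℝ | lifetime (φ · = 1) x = x j} :=
    measurableSet_eq_fun (measurable_lifetime _) (measurable_pi_apply j).coe_real_ereal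
  have hμ := measure_lifetime_eq hperm hties' hP j
  change (ℙ ((fun ω i => X i ω) ⁻¹' {x | lifetime (φ · = 1) x = x j})).toReal = _
  rw [← Measure.map_apply hXv hT, hμ,
    ENNReal.toReal_sum (ENNReal.sum_ne_top.1 (hμ ▸ measure_ne_top μ _)), criticalSets, sum_filter]
  refine sum_congr rfl fun A _ => ?_
  have := hφ01 (insert j A)
  have := hmono (subset_insert j A)
  split_ifs with h
  · rw [h.1, show φ A = 0 by omega]
    simp
  · rw [show φ (insert j A) = φ A by omega, sub_self, zero_div]

theorem barlow_proschan_stmt_11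
    {Ω : Type*} [MeasureSpace Ω] [IsProbabilityMeasure (ℙ : Measure Ω)]
    {n : ℕ} (X : Fin n → Ω → ℝ) (hX : ∀ i, Measurable (X i))
    (hexch : ∀ σ : Equiv.Perm (Fin n),
      Measure.map (fun ω i => X (σ i) ω) (ℙ : Measure Ω)
        = Measure.map (fun ω i => X i ω) (ℙ : Measure Ω))
    (hties : ∀ i j : Fin n, i ≠ j → (ℙ : Measure Ω) {ω | X i ω = X j ω} = 0)
    (φ : Finset (Fin n) → ℕ) (hφ01 : ∀ A, φ A ≤ 1)
    (hmono : ∀ ⦃A B : Finset (Fin n)⦄, A ⊆ B → φ A ≤ φ B)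
    (hempty : φ ∅ = 0) (hfull : φ Finset.univ = 1)
    (j : Fin n) :
    ((ℙ : Measure Ω) {ω |
        (⨆ (A : Finset (Fin n)) (_ : φ A = 1), ⨅ i ∈ A, (X i ω : EReal))
          = (X j ω : EReal)}).toReal
      = ∑ A ∈ (Finset.univ.erase j).powerset,
          ((φ (insert j A) : ℝ) - (φ A : ℝ)) / (n * (n - 1).choose A.card) :=
  barlow_proschan_stmt_11_general X hX hexch hties φ hφ01 hmono j
end

section
/- Let X_1,…,X_n be component lifetimes whose joint distribution has no ties. Then ℙ(T_φ = X_j) = b_j(φ) holds for every j ∈ [n] and every semicoherent structure function φ on n components if and only if q_j(A) = 1/(n·C(n−1,|A|)) for every j ∈ [n] and every A ⊆ [n]\{j}. -/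
/-!
Almost surely exactly one of the events "the components outliving `j` are exactly `A`" occurs, and
on it `T_φ = X_j` iff `j` is critical for `A`, i.e. `φ (A ∪ {j}) = 1` and `φ A = 0`. Hence
`ℙ(T_φ = X_j) = ∑_A (φ (A ∪ {j}) - φ A) q_j(A)`, which gives the "if" direction. Conversely, the
structure whose only minimal path set is `A ∪ {j}` yields `∑_{C ⊇ A} q_j(C) = ∑_{C ⊇ A} w(C)` for
every `A`, where `w(C) = 1 / (n C(n-1, |C|))`, and downward induction on `A` (Möbius inversion)
gives `q_j = w`.
-/

open MeasureTheory ProbabilityTheory Finset Function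

theorem Finset.eq_zero_of_forall_sum_supersets_eq_zero {α M : Type*} [DecidableEq α]
    [AddCommMonoid M] {S : Finset α} {f : Finset α → M}
    (h : ∀ B ⊆ S, ∑ C ∈ S.powerset with B ⊆ C, f C = 0) {A : Finset α} (hA : A ⊆ S) :
    f A = 0 := by
  refine strongDownwardInductionOn (p := fun A => A ⊆ S → f A = 0) A
    (fun B ih _ hB => ?_) (card_le_card hA) hA
  have hsum := h B hB
  rwa [← add_sum_erase _ _ (mem_filter.mpr ⟨mem_powerset.mpr hB, subset_refl B⟩), sum_eq_zero,
    add_zero] at hsum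
  intro C hC
  obtain ⟨hCB, hC⟩ := mem_erase.mp hC
  rw [mem_filter, mem_powerset] at hC
  exact ih (card_le_card hC.1) (ssubset_of_subset_of_ne hC.2 (Ne.symm hCB)) hC.1

namespace Reliability

variable {ι Ω : Type*}

structure IsSemicoherent [Fintype ι] (φ : Finset ι → ℕ) : Prop where
  le_one : ∀ A, φ A ≤ 1
  mono : Monotone φ
  map_empty : φ ∅ = 0
  map_univ : φ univ = 1

noncomputable def systemLifetime (X : ι → Ω → ℝ) (φ : Finset ι → ℕ) (ω : Ω) : EReal :=
  ⨆ (A : Finset ι) (_ : φ A = 1), ⨅ i ∈ A, (X i ω : EReal)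

/-- `A` is the set of components still working when `j` fails; `μ (rankEvent X j A)` is the
`q_j(A)` of the paper. -/
def rankEvent (X : ι → Ω → ℝ) (j : ι) (A : Finset ι) : Set Ω :=
  {ω | (∀ i, i ∉ A → i ≠ j → X i ω < X j ω) ∧ ∀ i ∈ A, X j ω < X i ω}

section Semicoherent

variable [Fintype ι] {φ : Finset ι → ℕ}

theorem IsSemicoherent.eq_zero_of_ne_one (hφ : IsSemicoherent φ) {A : Finset ι} (h : φ A ≠ 1) :
    φ A = 0 := by
  have := hφ.le_one A
  omega

theorem IsSemicoherent.eq_one_of_ne_zero (hφ : IsSemicoherent φ) {A : Finset ι} (h : φ A ≠ 0) :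
    φ A = 1 := by
  have := hφ.le_one A
  omega

theorem IsSemicoherent.not_subset_of_eq_zero (hφ : IsSemicoherent φ) {A B : Finset ι}
    (hA : φ A = 1) (hB : φ B = 0) : ¬A ⊆ B := fun hAB => by
  have := hφ.mono hAB
  omega

theorem IsSemicoherent.cast_sub_eq_ite [DecidableEq ι] (hφ : IsSemicoherent φ) (j : ι)
    (A : Finset ι) :
    ((φ (insert j A) : ℝ) - φ A) = if φ (insert j A) = 1 ∧ φ A = 0 then 1 else 0 := by
  have h₁ := hφ.le_one (insert j A)
  have h₂ := hφ.mono (subset_insert j A)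
  split_ifs with h
  · rw [h.1, h.2]; norm_num
  · have : φ (insert j A) = φ A := by omega
    rw [this, sub_self]

theorem isSemicoherent_ite_subset [DecidableEq ι] {D : Finset ι} (hD : D.Nonempty) :
    IsSemicoherent fun C => if D ⊆ C then 1 else 0 where
  le_one C := by split_ifs <;> simp
  mono C C' hCC' := by
    by_cases h : D ⊆ C
    · simp [h, h.trans hCC']
    · simp [h]
  map_empty := by simp [subset_empty, hD.ne_empty]
  map_univ := by simp

end Semicoherent

section Lifetime

variable {X : ι → Ω → ℝ} {φ : Finset ι → ℕ} {ω : Ω}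

theorem systemLifetime_le {t : ℝ} (h : ∀ A, φ A = 1 → ∃ i ∈ A, X i ω ≤ t) :
    systemLifetime X φ ω ≤ t :=
  iSup₂_le fun A hA =>
    let ⟨i, hi, hit⟩ := h A hA
    (iInf₂_le i hi).trans (EReal.coe_le_coe hit)

theorem le_systemLifetime {t : ℝ} {A : Finset ι} (hA : φ A = 1) (h : ∀ i ∈ A, t ≤ X i ω) :
    (t : EReal) ≤ systemLifetime X φ ω :=
  (le_iInf₂ fun i hi => EReal.coe_le_coe (h i hi)).trans
    (le_iSup₂ (f := fun A (_ : φ A = 1) => ⨅ i ∈ A, (X i ω : EReal)) A hA)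

variable {j : ι} {B : Finset ι}

theorem le_systemLifetime_of_mem_rankEvent [DecidableEq ι] (hω : ω ∈ rankEvent X j B)
    (h₁ : φ (insert j B) = 1) : (X j ω : EReal) ≤ systemLifetime X φ ω :=
  le_systemLifetime h₁ ((forall_mem_insert _ _ _).mpr ⟨le_rfl, fun i hi => (hω.2 i hi).le⟩)

variable [Fintype ι]

theorem systemLifetime_le_of_mem_rankEvent (hφ : IsSemicoherent φ) (hω : ω ∈ rankEvent X j B)
    (h₀ : φ B = 0) : systemLifetime X φ ω ≤ X j ω := systemLifetime_le fun A hA => by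
  obtain ⟨i, hiA, hiB⟩ := not_subset.mp (hφ.not_subset_of_eq_zero hA h₀)
  refine ⟨i, hiA, ?_⟩
  by_cases hij : i = j
  · rw [hij]
  · exact (hω.1 i hiB hij).le

theorem lt_systemLifetime_of_mem_rankEvent (hφ : IsSemicoherent φ) (hω : ω ∈ rankEvent X j B)
    (h₁ : φ B = 1) : (X j ω : EReal) < systemLifetime X φ ω := by
  have hne : B.Nonempty := nonempty_iff_ne_empty.mpr fun hB => by
    simp [hB, hφ.map_empty] at h₁
  obtain ⟨k, hk, hkmin⟩ := B.exists_min_image (X · ω) hne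
  calc (X j ω : EReal) < X k ω := EReal.coe_lt_coe (hω.2 k hk)
    _ ≤ systemLifetime X φ ω := le_systemLifetime h₁ hkmin

variable [DecidableEq ι]

theorem systemLifetime_lt_of_mem_rankEvent (hφ : IsSemicoherent φ) (hω : ω ∈ rankEvent X j B)
    (h₀ : φ (insert j B) = 0) : systemLifetime X φ ω < X j ω := by
  have hne : (insert j B)ᶜ.Nonempty := nonempty_iff_ne_empty.mpr fun hB => by
    simp [(compl_eq_empty_iff _).mp hB, hφ.map_univ] at h₀
  obtain ⟨k, hk, hkmax⟩ := (insert j B)ᶜ.exists_max_image (X · ω) hne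
  have hkB : k ∉ B ∧ k ≠ j := by simpa [not_or, and_comm] using hk
  calc systemLifetime X φ ω ≤ X k ω := systemLifetime_le fun A hA => by
        obtain ⟨i, hiA, hi⟩ := not_subset.mp (hφ.not_subset_of_eq_zero hA h₀)
        exact ⟨i, hiA, hkmax i (mem_compl.mpr hi)⟩
    _ < X j ω := EReal.coe_lt_coe (hω.1 k hkB.1 hkB.2)

theorem systemLifetime_eq_iff_of_mem_rankEvent (hφ : IsSemicoherent φ)
    (hω : ω ∈ rankEvent X j B) :
    systemLifetime X φ ω = X j ω ↔ φ (insert j B) = 1 ∧ φ B = 0 := by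
  refine ⟨fun hT => ⟨?_, ?_⟩, fun ⟨h₁, h₀⟩ => le_antisymm
    (systemLifetime_le_of_mem_rankEvent hφ hω h₀) (le_systemLifetime_of_mem_rankEvent hω h₁)⟩
  · by_contra h
    exact (systemLifetime_lt_of_mem_rankEvent hφ hω (hφ.eq_zero_of_ne_one h)).ne hT
  · by_contra h
    exact (lt_systemLifetime_of_mem_rankEvent hφ hω (hφ.eq_one_of_ne_zero h)).ne' hT

end Lifetime

section RankEvent

variable {X : ι → Ω → ℝ}

theorem notMem_of_mem_rankEvent {j : ι} {A : Finset ι} {ω : Ω} (hω : ω ∈ rankEvent X j A) :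
    j ∉ A :=
  fun hj => lt_irrefl _ (hω.2 j hj)

theorem eq_of_mem_rankEvent {j : ι} {A B : Finset ι} {ω : Ω} (hA : ω ∈ rankEvent X j A)
    (hB : ω ∈ rankEvent X j B) : A = B := by
  ext i
  by_cases hij : i = j
  · subst hij
    simp [notMem_of_mem_rankEvent hA, notMem_of_mem_rankEvent hB]
  exact ⟨fun hi => by_contra fun hiB => lt_asymm (hA.2 i hi) (hB.1 i hiB hij),
    fun hi => by_contra fun hiA => lt_asymm (hB.2 i hi) (hA.1 i hiA hij)⟩

theorem pairwise_disjoint_rankEvent (j : ι) : Pairwise (Disjoint on rankEvent X j) :=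
  fun _ _ hAB => Set.disjoint_left.mpr fun _ hωA hωB => hAB (eq_of_mem_rankEvent hωA hωB)

theorem mem_rankEvent_filter_lt [Fintype ι] {j : ι} {ω : Ω} (h : ∀ i ≠ j, X i ω ≠ X j ω) :
    ω ∈ rankEvent X j {i | X j ω < X i ω} := by
  refine ⟨fun i hi hij => ?_, fun i hi => (mem_filter.mp hi).2⟩
  simp only [mem_filter, mem_univ, true_and, not_lt] at hi
  exact lt_of_le_of_ne hi (h i hij)

variable [MeasurableSpace Ω]

theorem measurableSet_rankEvent [Fintype ι] (hX : ∀ i, Measurable (X i)) (j : ι) (A : Finset ι) :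
    MeasurableSet (rankEvent X j A) := by
  unfold rankEvent
  measurability

theorem ae_ne_of_no_ties (μ : Measure Ω) [Countable ι]
    (hties : ∀ i j : ι, i ≠ j → μ {ω | X i ω = X j ω} = 0) (j : ι) :
    ∀ᵐ ω ∂μ, ∀ i ≠ j, X i ω ≠ X j ω := by
  rw [ae_all_iff]
  intro i
  by_cases hij : i = j
  · simp [hij]
  · filter_upwards [measure_eq_zero_iff_ae_notMem.mp (hties i j hij)] with ω hω
    exact fun _ => hω

end RankEvent

section Formula

variable [Fintype ι] [DecidableEq ι] [MeasurableSpace Ω] {X : ι → Ω → ℝ} {φ : Finset ι → ℕ}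

theorem setOf_systemLifetime_ae_eq_biUnion (μ : Measure Ω)
    (hties : ∀ i j : ι, i ≠ j → μ {ω | X i ω = X j ω} = 0) (hφ : IsSemicoherent φ) (j : ι) :
    {ω | systemLifetime X φ ω = X j ω} =ᵐ[μ]
      ⋃ A ∈ (univ.erase j).powerset.filter (fun A => φ (insert j A) = 1 ∧ φ A = 0),
        rankEvent X j A := by
  rw [Filter.eventuallyEq_set]
  filter_upwards [ae_ne_of_no_ties μ hties j] with ω hω
  have hωB := mem_rankEvent_filter_lt hω
  simp only [systemLifetime_eq_iff_of_mem_rankEvent hφ hωB, Set.mem_iUnion,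
    mem_filter, mem_powerset, subset_erase, exists_prop]
  constructor
  · exact fun h => ⟨_, ⟨⟨subset_univ _, notMem_of_mem_rankEvent hωB⟩, h⟩, hωB⟩
  · rintro ⟨A, ⟨-, hA⟩, hωA⟩
    rwa [eq_of_mem_rankEvent hωA hωB] at hA

theorem measureReal_systemLifetime_eq (μ : Measure Ω) [IsFiniteMeasure μ]
    (hX : ∀ i, Measurable (X i)) (hties : ∀ i j : ι, i ≠ j → μ {ω | X i ω = X j ω} = 0)
    (hφ : IsSemicoherent φ) (j : ι) :
    μ.real {ω | systemLifetime X φ ω = X j ω} =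
      ∑ A ∈ (univ.erase j).powerset, ((φ (insert j A) : ℝ) - φ A) * μ.real (rankEvent X j A) := by
  rw [measureReal_congr (setOf_systemLifetime_ae_eq_biUnion μ hties hφ j),
    measureReal_biUnion_finset ((pairwise_disjoint_rankEvent j).set_pairwise _)
      fun A _ => measurableSet_rankEvent hX j A,
    sum_filter]
  refine sum_congr rfl fun A _ => ?_
  rw [hφ.cast_sub_eq_ite]
  split_ifs <;> simp

/-- Testing against the structure whose only minimal path set is `insert j B`, for which `j` is
critical exactly at the sets `A ⊇ B`, turns the hypothesis into `∑_{A ⊇ B} d A = 0`. -/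
theorem eq_zero_of_forall_isSemicoherent (j : ι) {d : Finset ι → ℝ}
    (h : ∀ φ, IsSemicoherent φ →
      ∑ A ∈ (univ.erase j).powerset, ((φ (insert j A) : ℝ) - φ A) * d A = 0)
    {A : Finset ι} (hjA : j ∉ A) : d A = 0 := by
  refine eq_zero_of_forall_sum_supersets_eq_zero (fun B hB => ?_)
    (subset_erase.mpr ⟨subset_univ A, hjA⟩)
  have hjB : j ∉ B := fun h => notMem_erase j _ (hB h)
  rw [← h _ (isSemicoherent_ite_subset (insert_nonempty j B)), sum_filter]
  refine sum_congr rfl fun C hC => ?_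
  have hjC : j ∉ C := fun h => notMem_erase j _ (mem_powerset.mp hC h)
  simp [insert_subset_insert_iff hjB, insert_subset_iff, hjC]

end Formula

end Reliability

theorem barlow_proschan_stmt_12
    {Ω : Type*} [MeasureSpace Ω] [IsProbabilityMeasure (ℙ : Measure Ω)]
    {n : ℕ} (X : Fin n → Ω → ℝ) (hX : ∀ i, Measurable (X i))
    (hties : ∀ i j : Fin n, i ≠ j → (ℙ : Measure Ω) {ω | X i ω = X j ω} = 0) :
    (∀ φ : Finset (Fin n) → ℕ, (∀ A, φ A ≤ 1) →
        (∀ ⦃A B : Finset (Fin n)⦄, A ⊆ B → φ A ≤ φ B) →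
        φ ∅ = 0 → φ Finset.univ = 1 →
        ∀ j : Fin n,
          ((ℙ : Measure Ω) {ω |
              (⨆ (A : Finset (Fin n)) (_ : φ A = 1), ⨅ i ∈ A, (X i ω : EReal))
                = (X j ω : EReal)}).toReal
            = ∑ A ∈ (Finset.univ.erase j).powerset,
                ((φ (insert j A) : ℝ) - (φ A : ℝ)) / (n * (n - 1).choose A.card))
    ↔ (∀ (j : Fin n) (A : Finset (Fin n)), j ∉ A →
        ((ℙ : Measure Ω) {ω | (∀ i, i ∉ A → i ≠ j → X i ω < X j ω) ∧
            ∀ i ∈ A, X j ω < X i ω}).toReal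
          = 1 / (n * (n - 1).choose A.card)) := by
  have formula := fun φ (hφ : Reliability.IsSemicoherent φ) j =>
    Reliability.measureReal_systemLifetime_eq ℙ hX hties hφ j
  constructor
  · intro h j A hjA
    refine sub_eq_zero.mp (Reliability.eq_zero_of_forall_isSemicoherent j (fun φ hφ => ?_) hjA
      (d := fun A => (ℙ : Measure Ω).real (Reliability.rankEvent X j A)
        - 1 / (n * (n - 1).choose A.card)))
    have hφj := (formula φ hφ j).symm.trans (h φ hφ.le_one hφ.mono hφ.map_empty hφ.map_univ j)
    simp_rw [mul_sub, sum_sub_distrib, mul_one_div, hφj, sub_self]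
  · intro hq φ hle hmono h0 h1 j
    refine (formula φ ⟨hle, hmono, h0, h1⟩ j).trans (sum_congr rfl fun A hA => ?_)
    have hqA : (ℙ : Measure Ω).real (Reliability.rankEvent X j A) = _ :=
      hq j A fun h => notMem_erase j _ (mem_powerset.mp hA h)
    rw [hqA, mul_one_div]
end

section
/- If the map (j, A) ↦ q_j(A) is symmetric, i.e. q_{σ(j)}(σ(A)) = q_j(A) for every j ∈ [n], every A ⊆ [n]\{j}, and every permutation σ of [n], then q_j(A) = 1/(n·C(n−1,|A|)) for every j ∈ [n] and every A ⊆ [n]\{j}. -/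
/-!
Fix `k < n`. When the lifetimes are pairwise distinct, exactly one pair `(j, A)` with `|A| = k`
occurs: `j` is the component with exactly `k` lifetimes above its own, and `A` is the set of
those components. Since ties are null, the `n · C(n-1, k)` probabilities `q_j(A)` with `|A| = k`
therefore sum to `1`. Any two such pairs are related by a permutation of `[n]`, so by symmetry
all these probabilities are equal.
-/

open MeasureTheory ProbabilityTheory Finset

section LinearOrder

variable {ι α : Type*} [LinearOrder α] {x : ι → α} {j j' : ι} {A A' : Finset ι}

def IsExactlyAbove (x : ι → α) (j : ι) (A : Finset ι) : Prop :=
  (∀ i, i ∉ A → i ≠ j → x i < x j) ∧ ∀ i ∈ A, x j < x i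

theorem IsExactlyAbove.notMem (h : IsExactlyAbove x j A) : j ∉ A :=
  fun hj => lt_irrefl _ (h.2 j hj)

variable [Fintype ι]

theorem IsExactlyAbove.eq_filter (h : IsExactlyAbove x j A) :
    A = univ.filter fun i => x j < x i := by
  ext i
  refine ⟨fun hi => mem_filter.2 ⟨mem_univ i, h.2 i hi⟩, fun hi => ?_⟩
  by_contra hiA
  have hij : i ≠ j := by rintro rfl; exact lt_irrefl _ (mem_filter.1 hi).2
  exact lt_asymm (mem_filter.1 hi).2 (h.1 i hiA hij)

theorem card_filter_lt_lt_of_lt {a b : ι} (h : x a < x b) :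
    #(univ.filter fun i => x b < x i) < #(univ.filter fun i => x a < x i) := by
  refine card_lt_card ((ssubset_iff_of_subset ?_).2 ⟨b, ?_, ?_⟩)
  · exact monotone_filter_right _ fun i _ => h.trans
  · simpa using h
  · simp

theorem IsExactlyAbove.eq_of_card_eq (h : IsExactlyAbove x j A) (h' : IsExactlyAbove x j' A')
    (hcard : #A = #A') : j = j' := by
  rw [h.eq_filter, h'.eq_filter] at hcard
  by_contra hne
  by_cases hj' : j' ∈ A
  · exact (card_filter_lt_lt_of_lt (h.2 j' hj')).ne' hcard
  · exact (card_filter_lt_lt_of_lt (h.1 j' hj' (Ne.symm hne))).ne hcard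

theorem exists_isExactlyAbove (hx : Function.Injective x) {k : ℕ} (hk : k < Fintype.card ι) :
    ∃ j A, #A = k ∧ IsExactlyAbove x j A := by
  set rank : ι → ℕ := fun j => #(univ.filter fun i => x j < x i)
  have hrank_lt : ∀ j, rank j < Fintype.card ι := fun j =>
    card_lt_card (filter_ssubset.2 ⟨j, mem_univ j, lt_irrefl _⟩)
  have hrank_inj : Function.Injective rank := by
    intro a b hab
    by_contra hne
    rcases lt_or_gt_of_ne (hx.ne hne) with hlt | hlt
    · exact (card_filter_lt_lt_of_lt hlt).ne' hab
    · exact (card_filter_lt_lt_of_lt hlt).ne hab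
  obtain ⟨j, -, hj⟩ := surjOn_of_injOn_of_card_le (s := univ) (t := range (Fintype.card ι)) rank
    (fun j _ => mem_range.2 (hrank_lt j)) hrank_inj.injOn (by simp) (mem_range.2 hk)
  refine ⟨j, _, hj, fun i hi hij => ?_, fun i hi => (mem_filter.1 hi).2⟩
  exact (lt_or_gt_of_ne (hx.ne hij)).resolve_right (by simpa using hi)

end LinearOrder

theorem Equiv.Perm.exists_apply_eq_and_image_eq {ι : Type*} [DecidableEq ι] {j j' : ι}
    {A A' : Finset ι} (hj : j ∉ A) (hj' : j' ∉ A') (hcard : #A = #A') :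
    ∃ σ : Equiv.Perm ι, σ j = j' ∧ A.image σ = A' := by
  set e := A.equivOfCardEq hcard
  obtain ⟨σ, hσ⟩ := Equiv.Perm.exists_extending_pair
    (fun o : Option A => o.elim j Subtype.val) (fun o : Option A => o.elim j' fun a => (e a : ι))
    (by rintro (_ | a) (_ | b) h <;> aesop) (by rintro (_ | a) (_ | b) h <;> aesop)
  refine ⟨σ, hσ none, eq_of_subset_of_card_le ?_ ?_⟩
  · rintro _ hb
    obtain ⟨a, ha, rfl⟩ := mem_image.1 hb
    exact (hσ (some ⟨a, ha⟩)).symm ▸ (e ⟨a, ha⟩).2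
  · rw [card_image_of_injective _ σ.injective, hcard]

section Measure

variable {Ω ι : Type*} [MeasurableSpace Ω] {μ : Measure Ω} [Fintype ι] [DecidableEq ι]
  {X : ι → Ω → ℝ}

/-- The event whose probability is `q_j(A)`. -/
def exactlyAboveEvent (X : ι → Ω → ℝ) (j : ι) (A : Finset ι) : Set Ω :=
  {ω | IsExactlyAbove (X · ω) j A}

omit [DecidableEq ι] in
theorem measurableSet_exactlyAboveEvent (hX : ∀ i, Measurable (X i)) (j : ι) (A : Finset ι) :
    MeasurableSet (exactlyAboveEvent X j A) := by
  simp only [exactlyAboveEvent, IsExactlyAbove, Set.ofPred_and, Set.ofPred_forall]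
  exact .inter (.iInter fun i => .iInter fun _ => .iInter fun _ => measurableSet_lt (hX i) (hX j))
    (.iInter fun i => .iInter fun _ => measurableSet_lt (hX j) (hX i))

omit [DecidableEq ι] in
theorem ae_injective_of_measure_setOf_eq_zero
    (hties : ∀ i j, i ≠ j → μ {ω | X i ω = X j ω} = 0) :
    ∀ᵐ ω ∂μ, Function.Injective (X · ω) := by
  have hpair : ∀ i j, ∀ᵐ ω ∂μ, X i ω = X j ω → i = j := fun i j => by
    by_cases hij : i = j
    · exact .of_forall fun _ _ => hij
    · filter_upwards [measure_eq_zero_iff_ae_notMem.1 (hties i j hij)] with ω hω h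
      exact absurd h hω
  simpa only [Function.Injective, ae_all_iff] using hpair

variable (ι) in
def pairsOfCard (k : ℕ) : Finset (Σ _ : ι, Finset ι) :=
  univ.sigma fun j => (univ.erase j).powersetCard k

theorem mem_pairsOfCard {k : ℕ} {j : ι} {A : Finset ι} :
    ⟨j, A⟩ ∈ pairsOfCard ι k ↔ j ∉ A ∧ #A = k := by
  simp [pairsOfCard, mem_powersetCard, subset_erase]

theorem card_pairsOfCard (k : ℕ) :
    #(pairsOfCard ι k) = Fintype.card ι * (Fintype.card ι - 1).choose k := by
  simp [pairsOfCard, card_sigma, card_powersetCard, card_erase_of_mem]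

omit [MeasurableSpace Ω] in
theorem pairwiseDisjoint_exactlyAboveEvent (k : ℕ) :
    (pairsOfCard ι k : Set (Σ _ : ι, Finset ι)).PairwiseDisjoint
      fun p => exactlyAboveEvent X p.1 p.2 := by
  rintro ⟨j, A⟩ hp ⟨j', A'⟩ hp' hne
  refine Set.disjoint_left.2 fun ω (h : IsExactlyAbove (X · ω) j A)
    (h' : IsExactlyAbove (X · ω) j' A') => hne ?_
  have hjj' : j = j' := h.eq_of_card_eq h' <| by
    rw [(mem_pairsOfCard.1 (mem_coe.1 hp)).2, (mem_pairsOfCard.1 (mem_coe.1 hp')).2]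
  subst hjj'
  rw [h.eq_filter, h'.eq_filter]

theorem sum_measureReal_exactlyAboveEvent [IsProbabilityMeasure μ] (hX : ∀ i, Measurable (X i))
    (hinj : ∀ᵐ ω ∂μ, Function.Injective (X · ω)) {k : ℕ} (hk : k < Fintype.card ι) :
    ∑ p ∈ pairsOfCard ι k, μ.real (exactlyAboveEvent X p.1 p.2) = 1 := by
  have hcover : ∀ᵐ ω ∂μ, ω ∈ ⋃ p ∈ pairsOfCard ι k, exactlyAboveEvent X p.1 p.2 := by
    filter_upwards [hinj] with ω hω
    obtain ⟨j, A, hA, h⟩ := exists_isExactlyAbove hω hk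
    exact Set.mem_biUnion (mem_coe.2 (mem_pairsOfCard.2 ⟨h.notMem, hA⟩)) h
  rw [← measureReal_biUnion_finset (pairwiseDisjoint_exactlyAboveEvent k)
    (fun p _ => measurableSet_exactlyAboveEvent hX p.1 p.2),
    measureReal_congr (ae_eq_univ.2 (ae_iff.1 hcover)), probReal_univ]

end Measure

theorem barlow_proschan_stmt_13
    {Ω : Type*} [MeasureSpace Ω] [IsProbabilityMeasure (ℙ : Measure Ω)]
    {n : ℕ} (X : Fin n → Ω → ℝ) (hX : ∀ i, Measurable (X i))
    (hties : ∀ i j : Fin n, i ≠ j → (ℙ : Measure Ω) {ω | X i ω = X j ω} = 0)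
    (hsymm : ∀ (σ : Equiv.Perm (Fin n)) (j : Fin n) (A : Finset (Fin n)), j ∉ A →
      ((ℙ : Measure Ω) {ω | (∀ i, i ∉ A.image σ → i ≠ σ j → X i ω < X (σ j) ω) ∧
          ∀ i ∈ A.image σ, X (σ j) ω < X i ω}).toReal
        = ((ℙ : Measure Ω) {ω | (∀ i, i ∉ A → i ≠ j → X i ω < X j ω) ∧
            ∀ i ∈ A, X j ω < X i ω}).toReal) :
    ∀ (j : Fin n) (A : Finset (Fin n)), j ∉ A →
      ((ℙ : Measure Ω) {ω | (∀ i, i ∉ A → i ≠ j → X i ω < X j ω) ∧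
          ∀ i ∈ A, X j ω < X i ω}).toReal
        = 1 / (n * (n - 1).choose A.card) := by
  intro j A hj
  have hconst : ∀ p ∈ pairsOfCard (Fin n) #A,
      (ℙ : Measure Ω).real (exactlyAboveEvent X p.1 p.2)
        = (ℙ : Measure Ω).real (exactlyAboveEvent X j A) := by
    rintro ⟨j', A'⟩ hp
    obtain ⟨hj', hcard⟩ := mem_pairsOfCard.1 hp
    obtain ⟨σ, rfl, rfl⟩ := Equiv.Perm.exists_apply_eq_and_image_eq hj hj' hcard.symm
    exact hsymm σ j A hj
  have hk : #A < Fintype.card (Fin n) := card_lt_univ_of_notMem hj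
  have hsum := sum_measureReal_exactlyAboveEvent hX (ae_injective_of_measure_setOf_eq_zero hties) hk
  rw [sum_congr rfl hconst, sum_const, card_pairsOfCard, nsmul_eq_mul, Fintype.card_fin] at hsum
  push_cast at hsum
  exact eq_one_div_of_mul_eq_one_right hsum
end

section
/- Let n ≥ 2 and suppose q_i(A) > 0 for every i ∈ [n] and every A ⊆ [n]\{i}. Then for a semicoherent structure function φ, the normalized Shannon entropy of the Barlow–Proschan index (I_BP^(1),…,I_BP^(n)) equals 0 if and only if there exists j ∈ [n] such that φ(A) = 1 exactly when j ∈ A (i.e. exactly one component of the system is relevant). -/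
/-!
The lifetime T is always attained by some component, so the Barlow–Proschan index sums to at
least 1, and its entropy vanishes exactly when it is a point mass at some j. If ℙ(T = X_j) = 1,
then φ A = 1 exactly when j ∈ A: otherwise there is an A ∌ j with φ A = 1 or
φ (A ∪ {j}) = 0, and on the event of probability q_j(A) > 0 the lifetime is then strictly above,
respectively below, X_j. Conversely, if j is the only relevant component then T = X_j, and since
there are no ties the index is the point mass at j.
-/

open MeasureTheory ProbabilityTheory Finset

section Lifetime

variable {ι : Type*} (φ : Finset ι → ℕ) (x : ι → ℝ)

noncomputable def systemLifetime : EReal :=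
  ⨆ (A : Finset ι) (_ : φ A = 1), ⨅ i ∈ A, (x i : EReal)

lemma systemLifetime_eq_sup [Fintype ι] :
    systemLifetime φ x = {A | φ A = 1}.toFinset.sup fun A => A.inf fun i => (x i : EReal) := by
  simp only [systemLifetime, Finset.sup_eq_iSup, Finset.inf_eq_iInf, Set.mem_toFinset,
    Set.mem_ofPred_eq]

variable {φ x}

lemma exists_systemLifetime_eq [Fintype ι] (hempty : φ ∅ = 0) (hfull : φ univ = 1) :
    ∃ j, systemLifetime φ x = x j := by
  obtain ⟨A, hA, hsup⟩ := exists_mem_eq_sup {A | φ A = 1}.toFinset ⟨univ, by simpa using hfull⟩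
    fun A => A.inf fun i => (x i : EReal)
  have hA_ne : A.Nonempty := nonempty_iff_ne_empty.2 fun h => by simp_all
  obtain ⟨j, -, hinf⟩ := exists_mem_eq_inf A hA_ne fun i => (x i : EReal)
  exact ⟨j, by rw [systemLifetime_eq_sup, hsup, hinf]⟩

lemma lt_systemLifetime {j : ι} {A : Finset ι} (hA : φ A = 1) (hlt : ∀ l ∈ A, x j < x l) :
    (x j : EReal) < systemLifetime φ x := by
  refine lt_of_lt_of_le ?_ (le_iSup₂_of_le A hA le_rfl)
  rw [← Finset.inf_eq_iInf, Finset.lt_inf_iff (EReal.coe_lt_top _)]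
  exact fun l hl => EReal.coe_lt_coe_iff.2 (hlt l hl)

lemma systemLifetime_lt [Fintype ι] {j : ι} (h : ∀ A, φ A = 1 → ∃ l ∈ A, x l < x j) :
    systemLifetime φ x < x j := by
  rw [systemLifetime_eq_sup, Finset.sup_lt_iff (EReal.bot_lt_coe _)]
  intro A hA
  obtain ⟨l, hlA, hl⟩ := h A (by simpa using hA)
  exact (inf_le hlA).trans_lt (EReal.coe_lt_coe_iff.2 hl)

lemma systemLifetime_eq_of_forall_eq_one_iff {j : ι} (hj : ∀ A, φ A = 1 ↔ j ∈ A) :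
    systemLifetime φ x = x j := by
  refine le_antisymm (iSup₂_le fun A hA => iInf₂_le j ((hj A).1 hA)) ?_
  refine le_iSup₂_of_le {j} ((hj {j}).2 (mem_singleton_self j)) ?_
  rw [← Finset.inf_eq_iInf, Finset.inf_singleton]

end Lifetime

section Probability

variable {Ω : Type*} [MeasurableSpace Ω] {μ : Measure Ω} [IsProbabilityMeasure μ]

lemma measureReal_lt_one_of_disjoint {s t : Set Ω} (ht : MeasurableSet t) (hpos : 0 < μ.real t)
    (hst : Disjoint s t) : μ.real s < 1 :=
  calc μ.real s ≤ μ.real tᶜ := measureReal_mono (Set.subset_compl_iff_disjoint_right.2 hst)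
    _ = 1 - μ.real t := probReal_compl_eq_one_sub ht
    _ < 1 := by linarith

lemma one_le_sum_measureReal_of_iUnion_eq_univ {ι : Type*} [Fintype ι] {s : ι → Set Ω}
    (hs : ⋃ i, s i = Set.univ) : 1 ≤ ∑ i, μ.real (s i) :=
  calc 1 = μ.real (⋃ i, s i) := by rw [hs, probReal_univ]
    _ ≤ ∑ i, μ.real (s i) := measureReal_iUnion_fintype_le s

end Probability

lemma sum_mul_log_eq_zero_iff {ι : Type*} {s : Finset ι} {p : ι → ℝ} (h0 : ∀ i ∈ s, 0 ≤ p i)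
    (h1 : ∀ i ∈ s, p i ≤ 1) :
    ∑ i ∈ s, p i * Real.log (p i) = 0 ↔ ∀ i ∈ s, p i = 0 ∨ p i = 1 := by
  have hnonpos : ∀ i ∈ s, p i * Real.log (p i) ≤ 0 := fun i hi =>
    mul_nonpos_of_nonneg_of_nonpos (h0 i hi) (Real.log_nonpos (h0 i hi) (h1 i hi))
  rw [sum_eq_zero_iff_of_nonpos hnonpos]
  refine forall₂_congr fun i hi => ?_
  rw [mul_eq_zero, Real.log_eq_zero]
  have := h0 i hi
  constructor
  · rintro (h | h | h | h) <;> first | exact .inl h | exact .inr h | linarith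
  · rintro (h | h) <;> simp [h]

lemma eq_one_iff_mem_of_forall_notMem {ι : Type*} [DecidableEq ι] {φ : Finset ι → ℕ}
    (hle : ∀ A, φ A ≤ 1) {j : ι} (h : ∀ A, j ∉ A → ¬(φ A = 1 ∨ φ (insert j A) = 0))
    (A : Finset ι) : φ A = 1 ↔ j ∈ A := by
  refine ⟨fun hA => by_contra fun hjA => h A hjA (.inl hA), fun hjA => ?_⟩
  have := h (A.erase j) (notMem_erase j A)
  rw [insert_erase hjA] at this
  have := hle A
  omega

section SurvivorEvent

variable {Ω ι : Type*} (X : ι → Ω → ℝ) (j : ι) (A : Finset ι)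

/-- The event whose probability is `q_j(A)`. -/
def survivorEvent : Set Ω :=
  {ω | (∀ l, l ∉ A → l ≠ j → X l ω < X j ω) ∧ ∀ l ∈ A, X j ω < X l ω}

variable {X j A}

lemma measurableSet_survivorEvent [MeasurableSpace Ω] [Countable ι] (hX : ∀ i, Measurable (X i)) :
    MeasurableSet (survivorEvent X j A) := by
  simp only [survivorEvent, Set.ofPred_and, Set.ofPred_forall]
  exact .inter (.iInter fun l => .iInter fun _ => .iInter fun _ => measurableSet_lt (hX l) (hX j))
    (.iInter fun l => .iInter fun _ => measurableSet_lt (hX j) (hX l))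

variable [Fintype ι] [DecidableEq ι] {φ : Finset ι → ℕ}

lemma systemLifetime_ne_of_mem_survivorEvent (hmono : Monotone φ)
    (hcase : φ A = 1 ∨ φ (insert j A) = 0) {ω : Ω} (hω : ω ∈ survivorEvent X j A) :
    systemLifetime φ (X · ω) ≠ X j ω := by
  obtain ⟨hbelow, habove⟩ := hω
  rcases hcase with hA | hA
  · exact (lt_systemLifetime hA habove).ne'
  · refine (systemLifetime_lt fun B hB => ?_).ne
    obtain ⟨l, hlB, hl⟩ := not_subset.1 fun hsub : B ⊆ insert j A => by have := hmono hsub; omega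
    rw [mem_insert, not_or] at hl
    exact ⟨l, hlB, hbelow l hl.2 hl.1⟩

lemma measureReal_systemLifetime_eq_lt_one [MeasurableSpace Ω] {μ : Measure Ω} [IsProbabilityMeasure μ]
    (hX : ∀ i, Measurable (X i)) (hmono : Monotone φ) (hcase : φ A = 1 ∨ φ (insert j A) = 0)
    (hpos : 0 < μ.real (survivorEvent X j A)) :
    μ.real {ω | systemLifetime φ (X · ω) = X j ω} < 1 :=
  measureReal_lt_one_of_disjoint (measurableSet_survivorEvent hX) hpos <|
    Set.disjoint_left.2 fun _ hω hE => systemLifetime_ne_of_mem_survivorEvent hmono hcase hE hω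

end SurvivorEvent

theorem barlow_proschan_stmt_17_general
    {Ω : Type*} [MeasureSpace Ω] [IsProbabilityMeasure (ℙ : Measure Ω)]
    {n : ℕ} (hn : 2 ≤ n) (X : Fin n → Ω → ℝ) (hX : ∀ i, Measurable (X i))
    (hties : ∀ i j : Fin n, i ≠ j → (ℙ : Measure Ω) {ω | X i ω = X j ω} = 0)
    (hqpos : ∀ (i : Fin n) (A : Finset (Fin n)), i ∉ A →
      0 < ((ℙ : Measure Ω) {ω | (∀ l, l ∉ A → l ≠ i → X l ω < X i ω) ∧
          ∀ l ∈ A, X i ω < X l ω}).toReal)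
    (φ : Finset (Fin n) → ℕ)
    (hmono : ∀ ⦃A B : Finset (Fin n)⦄, A ⊆ B → φ A ≤ φ B)
    (hempty : φ ∅ = 0) (hfull : φ Finset.univ = 1) :
    (-(1 / Real.log n) * ∑ j : Fin n,
        ((ℙ : Measure Ω) {ω |
            (⨆ (A : Finset (Fin n)) (_ : φ A = 1), ⨅ i ∈ A, (X i ω : EReal))
              = (X j ω : EReal)}).toReal
          * Real.log (((ℙ : Measure Ω) {ω |
              (⨆ (A : Finset (Fin n)) (_ : φ A = 1), ⨅ i ∈ A, (X i ω : EReal))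
                = (X j ω : EReal)}).toReal) = 0)
    ↔ ∃ j : Fin n, ∀ A : Finset (Fin n), (φ A = 1 ↔ j ∈ A) := by
  set p : Fin n → ℝ := fun j => (ℙ : Measure Ω).real {ω | systemLifetime φ (X · ω) = X j ω}
  change -(1 / Real.log n) * ∑ j, p j * Real.log (p j) = 0 ↔ _
  have hlog : Real.log n ≠ 0 := (Real.log_pos (by exact_mod_cast hn)).ne'
  rw [mul_eq_zero, or_iff_right (by simpa using hlog),
    sum_mul_log_eq_zero_iff (fun _ _ => measureReal_nonneg) (fun _ _ => measureReal_le_one)]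
  constructor
  · intro hp
    obtain ⟨j, hj⟩ : ∃ j, p j = 1 := by
      by_contra! hne
      have hsum : 1 ≤ ∑ j, p j := one_le_sum_measureReal_of_iUnion_eq_univ <|
        Set.iUnion_eq_univ_iff.2 fun ω => exists_systemLifetime_eq hempty hfull
      rw [sum_eq_zero fun j _ => (hp j (mem_univ j)).resolve_right (hne j)] at hsum
      exact zero_lt_one.not_ge hsum
    refine ⟨j, eq_one_iff_mem_of_forall_notMem (fun A => (hmono (subset_univ A)).trans_eq hfull)
      fun A hjA hcase => ?_⟩
    exact (measureReal_systemLifetime_eq_lt_one hX hmono hcase (hqpos j A hjA)).ne hj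
  · rintro ⟨j, hj⟩ i -
    have hT : ∀ ω, systemLifetime φ (X · ω) = X j ω := fun ω =>
      systemLifetime_eq_of_forall_eq_one_iff hj
    by_cases hij : i = j
    · subst hij
      simp [hT]
    · have hsub : {ω | systemLifetime φ (X · ω) = X i ω} ⊆ {ω | X j ω = X i ω} :=
        fun ω hω => by simpa [hT] using hω
      left
      simp [Measure.real, measure_mono_null hsub (hties j i (Ne.symm hij))]

theorem barlow_proschan_stmt_17
    {Ω : Type*} [MeasureSpace Ω] [IsProbabilityMeasure (ℙ : Measure Ω)]
    {n : ℕ} (hn : 2 ≤ n) (X : Fin n → Ω → ℝ) (hX : ∀ i, Measurable (X i))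
    (hties : ∀ i j : Fin n, i ≠ j → (ℙ : Measure Ω) {ω | X i ω = X j ω} = 0)
    (hqpos : ∀ (i : Fin n) (A : Finset (Fin n)), i ∉ A →
      0 < ((ℙ : Measure Ω) {ω | (∀ l, l ∉ A → l ≠ i → X l ω < X i ω) ∧
          ∀ l ∈ A, X i ω < X l ω}).toReal)
    (φ : Finset (Fin n) → ℕ) (hφ01 : ∀ A, φ A ≤ 1)
    (hmono : ∀ ⦃A B : Finset (Fin n)⦄, A ⊆ B → φ A ≤ φ B)
    (hempty : φ ∅ = 0) (hfull : φ Finset.univ = 1) :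
    (-(1 / Real.log n) * ∑ j : Fin n,
        ((ℙ : Measure Ω) {ω |
            (⨆ (A : Finset (Fin n)) (_ : φ A = 1), ⨅ i ∈ A, (X i ω : EReal))
              = (X j ω : EReal)}).toReal
          * Real.log (((ℙ : Measure Ω) {ω |
              (⨆ (A : Finset (Fin n)) (_ : φ A = 1), ⨅ i ∈ A, (X i ω : EReal))
                = (X j ω : EReal)}).toReal) = 0)
    ↔ ∃ j : Fin n, ∀ A : Finset (Fin n), (φ A = 1 ↔ j ∈ A) :=
  barlow_proschan_stmt_17_general hn X hX hties hqpos φ hmono hempty hfull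
end

section
/- Let n ≥ 2 and suppose q(A) > 0 for every A ⊆ [n]. Then for a semicoherent structure function φ, the normalized Shannon entropy of the signature (p_1,…,p_n), where p_k = ℙ(T = X_{k:n}), equals 0 if and only if there exists k ∈ [n] such that φ(A) = 1 exactly when |A| ≥ n−k+1 (i.e. the system is a k-out-of-n system). -/
open MeasureTheory ProbabilityTheory Finset

/-!
Off a null set the lifetimes are distinct, so `T` equals exactly one order statistic and the
signature is a probability vector; its entropy vanishes iff some `p_k = 1`. If the components of
`A` outlive all the others at `ω`, then `φ A = 1` iff `min_{i ∈ A} X_i = X_{n-|A|+1:n}` is at most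
`T`. Hence `T = X_{k:n}` at a point of this event, which has probability `q(A) > 0`, forces
`φ A = 1 ↔ n - k + 1 ≤ |A|`. Conversely, for a `k`-out-of-`n` system, testing this on the upper
sets `{j | X_i ≤ X_j}` gives `T = X_{k:n}` whenever there are no ties.
-/

theorem sum_mul_log_eq_zero_iff_exists_eq_one {ι : Type*} {s : Finset ι} {p : ι → ℝ}
    (hp : ∀ i ∈ s, 0 ≤ p i) (hsum : ∑ i ∈ s, p i = 1) :
    ∑ i ∈ s, p i * Real.log (p i) = 0 ↔ ∃ i ∈ s, p i = 1 := by
  classical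
  have hp1 : ∀ i ∈ s, p i ≤ 1 := fun i hi =>
    hsum ▸ single_le_sum hp hi
  rw [sum_eq_zero_iff_of_nonpos fun i hi => Real.mul_log_nonpos (hp i hi) (hp1 i hi)]
  constructor
  · intro h
    by_contra! hne
    have : ∀ i ∈ s, p i = 0 := fun i hi => by
      rcases mul_eq_zero.1 (h i hi) with h0 | hlog
      · exact h0
      · rcases Real.log_eq_zero.1 hlog with h0 | h1 | hm1
        · exact h0
        · exact absurd h1 (hne i hi)
        · linarith [hp i hi]
    simp [sum_eq_zero this] at hsum
  · rintro ⟨i, hi, hpi⟩ j hj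
    obtain rfl | hji := eq_or_ne j i
    · simp [hpi]
    · have hrest : ∑ l ∈ s.erase i, p l = 0 := by
        linarith [add_sum_erase s p hi]
      rw [(sum_eq_zero_iff_of_nonneg fun l hl => hp l (mem_of_mem_erase hl)).1 hrest j
        (mem_erase.2 ⟨hji, hj⟩), zero_mul]

namespace SystemSignature

variable {Ω ι : Type*}

noncomputable def lifetime (φ : Finset ι → ℕ) (X : ι → Ω → ℝ) (ω : Ω) : EReal :=
  ⨆ (A : Finset ι) (_ : φ A = 1), ⨅ i ∈ A, (X i ω : EReal)

/-- `q(A)` is the probability of `{ω | IsTopSet X ω A}`. -/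
def IsTopSet (X : ι → Ω → ℝ) (ω : Ω) (A : Finset ι) : Prop :=
  ∀ i, i ∉ A → ∀ l ∈ A, X i ω < X l ω

noncomputable def rank [Fintype ι] (X : ι → Ω → ℝ) (ω : Ω) (i : ι) : ℕ :=
  #{j | X j ω ≤ X i ω}

def IsKOutOfN {n : ℕ} (φ : Finset (Fin n) → ℕ) (k : ℕ) : Prop :=
  ∀ A, φ A = 1 ↔ n - k + 1 ≤ #A

section Lifetime

variable {φ : Finset ι → ℕ} (X : ι → Ω → ℝ) (ω : Ω)

theorem inf_le_lifetime {A : Finset ι} (hA : φ A = 1) :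
    (A.inf fun i => (X i ω : EReal)) ≤ lifetime φ X ω := by
  rw [Finset.inf_eq_iInf]
  exact le_iSup₂ (f := fun A (_ : φ A = 1) => ⨅ i ∈ A, (X i ω : EReal)) A hA

variable [Fintype ι]

theorem exists_lifetime_eq_inf (hfull : φ univ = 1) :
    ∃ B, φ B = 1 ∧ lifetime φ X ω = B.inf fun i => (X i ω : EReal) := by
  classical
  obtain ⟨B, hB, hsup⟩ := exists_mem_eq_sup {A | φ A = 1} ⟨univ, by simpa using hfull⟩
    fun A => A.inf fun i => (X i ω : EReal)
  refine ⟨B, (mem_filter.1 hB).2, ?_⟩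
  rw [← hsup, Finset.sup_eq_iSup]
  simp [lifetime, Finset.inf_eq_iInf]

variable {X ω}

/-- If `min A ≤ T`, a working set `B` realising `T` has all its lifetimes `≥ min A`, so `B ⊆ A`. -/
theorem eq_one_iff_inf_le_lifetime (hφ01 : ∀ A, φ A ≤ 1)
    (hmono : ∀ ⦃A B : Finset ι⦄, A ⊆ B → φ A ≤ φ B) (hfull : φ univ = 1)
    {A : Finset ι} (hA : IsTopSet X ω A) :
    φ A = 1 ↔ (A.inf fun i => (X i ω : EReal)) ≤ lifetime φ X ω := by
  refine ⟨inf_le_lifetime X ω, fun hle => ?_⟩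
  obtain ⟨B, hB, hT⟩ := exists_lifetime_eq_inf X ω hfull
  have hBA : B ⊆ A := fun j hj => by
    by_contra hjA
    have hlt : (X j ω : EReal) < A.inf fun i => (X i ω : EReal) :=
      (Finset.lt_inf_iff (EReal.coe_lt_top _)).2 fun l hl =>
        EReal.coe_lt_coe_iff.2 (hA j hjA l hl)
    exact (hlt.trans_le (hle.trans (hT ▸ inf_le hj))).false
  exact le_antisymm (hφ01 A) (hB ▸ hmono hBA)

end Lifetime

section Rank

variable [Fintype ι] (X : ι → Ω → ℝ) (ω : Ω)

theorem one_le_rank (i : ι) : 1 ≤ rank X ω i :=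
  card_pos.2 ⟨i, by simp⟩

theorem rank_le_card (i : ι) : rank X ω i ≤ Fintype.card ι :=
  card_filter_le _ _

theorem rank_le_rank_iff {i j : ι} : rank X ω i ≤ rank X ω j ↔ X i ω ≤ X j ω := by
  refine ⟨fun h => not_lt.1 fun hlt => h.not_gt (card_lt_card ?_), fun h => card_le_card ?_⟩
  · refine (ssubset_iff_of_subset fun l hl => ?_).2 ⟨i, by simp, by simpa using hlt⟩
    simp only [mem_filter, mem_univ, true_and] at hl ⊢
    exact hl.trans hlt.le
  · intro l hl
    simp only [mem_filter, mem_univ, true_and] at hl ⊢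
    exact hl.trans h

variable {X ω}

theorem rank_injective (hinj : Function.Injective (X · ω)) : Function.Injective (rank X ω) :=
  fun _ _ h => hinj (le_antisymm ((rank_le_rank_iff X ω).1 h.le) ((rank_le_rank_iff X ω).1 h.ge))

theorem rank_add_card_of_isTopSet (hinj : Function.Injective (X · ω)) {A : Finset ι}
    (hA : IsTopSet X ω A) {i : ι} (hi : i ∈ A) (hmin : ∀ j ∈ A, X i ω ≤ X j ω) :
    rank X ω i + #A = Fintype.card ι + 1 := by
  classical
  have hbelow : ({j | X j ω ≤ X i ω} : Finset ι) = insert i Aᶜ := by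
    ext j
    simp only [mem_filter, mem_univ, true_and, mem_insert, mem_compl]
    refine ⟨fun hj => or_iff_not_imp_right.2 fun hjA => ?_, ?_⟩
    · exact hinj (le_antisymm hj (hmin j (not_not.1 hjA)))
    · rintro (rfl | hjA)
      exacts [le_rfl, (hA j hjA i hi).le]
  rw [rank, hbelow, card_insert_of_notMem (by simpa using hi), card_compl]
  have := card_le_univ A
  omega

end Rank

section OrderStatistic

variable {n : ℕ} (X : Fin n → Ω → ℝ) (ω : Ω)

theorem orderStatE_rank (i : Fin n) : orderStatE X (rank X ω i) ω = X i ω := by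
  refine le_antisymm (sInf_le ?_) (le_sInf fun t ht => not_lt.1 fun hlt => ?_)
  · simp [rank]
  · refine (show rank X ω i ≤ _ from ht).not_gt
      (card_lt_card ((ssubset_iff_of_subset fun l hl => ?_).2 ⟨i, by simp, by simpa using hlt⟩))
    simp only [mem_filter, mem_univ, true_and] at hl ⊢
    exact EReal.coe_le_coe_iff.1 (hl.trans hlt.le)

theorem orderStatE_eq_iInf_iSup (k : ℕ) :
    orderStatE X k ω = ⨅ (A : Finset (Fin n)) (_ : #A = k), ⨆ i ∈ A, (X i ω : EReal) := by
  refine le_antisymm (le_iInf₂ fun A hA => sInf_le ?_) (le_sInf fun t ht => ?_)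
  · refine hA.symm.trans_le (card_le_card fun i hi => ?_)
    simpa using le_iSup₂ (f := fun i (_ : i ∈ A) => (X i ω : EReal)) i hi
  · obtain ⟨A, hAt, hA⟩ := exists_subset_card_eq (show k ≤ _ from ht)
    exact iInf₂_le_of_le A hA (iSup₂_le fun i hi => by simpa using hAt hi)

variable {X ω}

theorem exists_rank_eq (hinj : Function.Injective (X · ω)) {k : ℕ} (hk : k ∈ Icc 1 n) :
    ∃ i, rank X ω i = k := by
  obtain ⟨i, -, hi⟩ := surjOn_of_injOn_of_card_le (s := univ) (rank X ω)
    (fun i _ => mem_Icc.2 ⟨one_le_rank X ω i, (rank_le_card X ω i).trans_eq (Fintype.card_fin n)⟩)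
    (rank_injective hinj).injOn (by simp) hk
  exact ⟨i, hi⟩

theorem orderStatE_le_orderStatE_iff (hinj : Function.Injective (X · ω)) {j k : ℕ}
    (hj : j ∈ Icc 1 n) (hk : k ∈ Icc 1 n) : orderStatE X j ω ≤ orderStatE X k ω ↔ j ≤ k := by
  obtain ⟨i, rfl⟩ := exists_rank_eq hinj hj
  obtain ⟨i', rfl⟩ := exists_rank_eq hinj hk
  rw [orderStatE_rank, orderStatE_rank, EReal.coe_le_coe_iff, rank_le_rank_iff]

theorem orderStatE_injOn (hinj : Function.Injective (X · ω)) :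
    Set.InjOn (orderStatE X · ω) (Icc 1 n) := fun _ hj _ hk h =>
  le_antisymm ((orderStatE_le_orderStatE_iff hinj hj hk).1 h.le)
    ((orderStatE_le_orderStatE_iff hinj hk hj).1 h.ge)

end OrderStatistic

section SystemsOfFinOrder

variable {n : ℕ} {φ : Finset (Fin n) → ℕ} {X : Fin n → Ω → ℝ} {ω : Ω}

theorem exists_lifetime_eq_orderStatE (hempty : φ ∅ = 0) (hfull : φ univ = 1) :
    ∃ k ∈ Icc 1 n, lifetime φ X ω = orderStatE X k ω := by
  obtain ⟨B, hB, hT⟩ := exists_lifetime_eq_inf X ω hfull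
  have hBne : B.Nonempty := nonempty_iff_ne_empty.2 fun h => by simp [h, hempty] at hB
  obtain ⟨i, -, hi⟩ := exists_mem_eq_inf B hBne fun i => (X i ω : EReal)
  refine ⟨rank X ω i, mem_Icc.2 ⟨one_le_rank X ω i, by simpa using rank_le_card X ω i⟩, ?_⟩
  rw [hT, hi, orderStatE_rank]

theorem eq_one_iff_of_isTopSet (hφ01 : ∀ A, φ A ≤ 1)
    (hmono : ∀ ⦃A B : Finset (Fin n)⦄, A ⊆ B → φ A ≤ φ B) (hempty : φ ∅ = 0)
    (hfull : φ univ = 1) (hinj : Function.Injective (X · ω)) {k : ℕ} (hk : k ∈ Icc 1 n)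
    (hT : lifetime φ X ω = orderStatE X k ω) {A : Finset (Fin n)} (hA : IsTopSet X ω A) :
    φ A = 1 ↔ n - k + 1 ≤ #A := by
  rcases A.eq_empty_or_nonempty with rfl | hAne
  · simp [hempty]
  obtain ⟨i, hi, hmin⟩ := exists_min_image A (X · ω) hAne
  have hinf : (A.inf fun j => (X j ω : EReal)) = X i ω :=
    le_antisymm (inf_le hi) (Finset.le_inf fun j hj => EReal.coe_le_coe_iff.2 (hmin j hj))
  have hrank := rank_add_card_of_isTopSet hinj hA hi hmin
  simp only [Fintype.card_fin] at hrank
  have hrank_mem : rank X ω i ∈ Icc 1 n :=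
    mem_Icc.2 ⟨one_le_rank X ω i, by have := hAne.card_pos; omega⟩
  rw [eq_one_iff_inf_le_lifetime hφ01 hmono hfull hA, hinf, hT, ← orderStatE_rank X ω i,
    orderStatE_le_orderStatE_iff hinj hrank_mem hk]
  have := mem_Icc.1 hk
  omega

theorem lifetime_eq_orderStatE_of_isKOutOfN (hφ01 : ∀ A, φ A ≤ 1)
    (hmono : ∀ ⦃A B : Finset (Fin n)⦄, A ⊆ B → φ A ≤ φ B) (hempty : φ ∅ = 0)
    (hfull : φ univ = 1) (hinj : Function.Injective (X · ω)) {k : ℕ} (hk : k ∈ Icc 1 n)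
    (hφk : IsKOutOfN φ k) : lifetime φ X ω = orderStatE X k ω := by
  obtain ⟨m, hm, hTm⟩ := exists_lifetime_eq_orderStatE (X := X) (ω := ω) hempty hfull
  have hrank : ∀ i, rank X ω i ≤ k ↔ rank X ω i ≤ m := fun i => by
    have hU : IsTopSet X ω {j | X i ω ≤ X j ω} := fun j hj l hl => by
      simp only [mem_filter, mem_univ, true_and, not_le] at hj hl
      exact hj.trans_le hl
    have hcard := rank_add_card_of_isTopSet hinj hU (i := i) (by simp) (by simp)
    simp only [Fintype.card_fin] at hcard
    have hle : ∀ l ∈ Icc 1 n, n - l + 1 ≤ #{j | X i ω ≤ X j ω} ↔ rank X ω i ≤ l := fun l hl => by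
      have := mem_Icc.1 hl
      omega
    rw [← hle k hk, ← hle m hm]
    exact (hφk _).symm.trans (eq_one_iff_of_isTopSet hφ01 hmono hempty hfull hinj hm hTm hU)
  obtain ⟨i, hi⟩ := exists_rank_eq hinj hk
  obtain ⟨i', hi'⟩ := exists_rank_eq hinj hm
  have hkm : k ≤ m := hi ▸ (hrank i).1 hi.le
  have hmk : m ≤ k := hi' ▸ (hrank i').2 hi'.le
  rw [hTm, le_antisymm hmk hkm]

end SystemsOfFinOrder

section Probability

variable [MeasurableSpace Ω] {μ : Measure Ω}

theorem ae_injective_of_measure_eq_zero [Countable ι] {X : ι → Ω → ℝ}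
    (hties : ∀ i j, i ≠ j → μ {ω | X i ω = X j ω} = 0) :
    ∀ᵐ ω ∂μ, Function.Injective (X · ω) := by
  have hpair : ∀ i j, ∀ᵐ ω ∂μ, X i ω = X j ω → i = j := fun i j => by
    obtain rfl | hij := eq_or_ne i j
    · exact .of_forall fun _ _ => rfl
    · filter_upwards [measure_eq_zero_iff_ae_notMem.1 (hties i j hij)] with ω hω h
      exact absurd h hω
  filter_upwards [ae_all_iff.2 fun i => ae_all_iff.2 (hpair i)] with ω hω i j using hω i j

variable {n : ℕ} {X : Fin n → Ω → ℝ}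

theorem measurable_orderStatE (hX : ∀ i, Measurable (X i)) (k : ℕ) :
    Measurable (orderStatE X k) := by
  simp_rw [funext (orderStatE_eq_iInf_iSup X · k)]
  exact .iInf fun A => .iInf fun _ => .iSup fun i => .iSup fun _ =>
    measurable_coe_real_ereal.comp (hX i)

theorem measurable_lifetime (φ : Finset (Fin n) → ℕ) (hX : ∀ i, Measurable (X i)) :
    Measurable (lifetime φ X) :=
  .iSup fun _ => .iSup fun _ => .iInf fun i => .iInf fun _ =>
    measurable_coe_real_ereal.comp (hX i)

theorem measurableSet_lifetime_eq_orderStatE (φ : Finset (Fin n) → ℕ)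
    (hX : ∀ i, Measurable (X i)) (k : ℕ) :
    MeasurableSet {ω | lifetime φ X ω = orderStatE X k ω} :=
  measurableSet_eq_fun (measurable_lifetime φ hX) (measurable_orderStatE hX k)

noncomputable def signature (μ : Measure Ω) (φ : Finset (Fin n) → ℕ) (X : Fin n → Ω → ℝ)
    (k : ℕ) : ℝ :=
  (μ {ω | lifetime φ X ω = orderStatE X k ω}).toReal

variable [IsProbabilityMeasure μ] {φ : Finset (Fin n) → ℕ} (hX : ∀ i, Measurable (X i))
  (hties : ∀ i j, i ≠ j → μ {ω | X i ω = X j ω} = 0)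
include hX hties

theorem sum_signature_eq_one (hempty : φ ∅ = 0) (hfull : φ univ = 1) :
    ∑ k ∈ Icc 1 n, signature μ φ X k = 1 := by
  have hcover : ⋃ k ∈ Icc 1 n, {ω | lifetime φ X ω = orderStatE X k ω} = Set.univ :=
    Set.eq_univ_of_forall fun ω => by simpa using exists_lifetime_eq_orderStatE hempty hfull
  simp only [signature]
  rw [← ENNReal.toReal_sum fun _ _ => measure_ne_top _ _, ← measure_biUnion_finset₀
    ?_ fun k _ => (measurableSet_lifetime_eq_orderStatE φ hX k).nullMeasurableSet, hcover,
    measure_univ, ENNReal.toReal_one]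
  intro j hj k hk hjk
  refine measure_eq_zero_iff_ae_notMem.2 ?_
  filter_upwards [ae_injective_of_measure_eq_zero hties] with ω hω ⟨hj', hk'⟩
  exact hjk (orderStatE_injOn hω hj hk (hj'.symm.trans hk'))

theorem signature_eq_one_iff (hq : ∀ A, μ {ω | IsTopSet X ω A} ≠ 0) (hφ01 : ∀ A, φ A ≤ 1)
    (hmono : ∀ ⦃A B : Finset (Fin n)⦄, A ⊆ B → φ A ≤ φ B) (hempty : φ ∅ = 0)
    (hfull : φ univ = 1) {k : ℕ} (hk : k ∈ Icc 1 n) :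
    signature μ φ X k = 1 ↔ IsKOutOfN φ k := by
  rw [signature, ENNReal.toReal_eq_one_iff, ← measure_univ (μ := μ),
    ← ae_mem_iff_measure_eq (measurableSet_lifetime_eq_orderStatE φ hX k).nullMeasurableSet]
  constructor
  · intro h A
    obtain ⟨ω, hωA, hT, hinj⟩ := Measure.exists_mem_of_measure_ne_zero_of_ae (hq A)
      (ae_restrict_of_ae (h.and (ae_injective_of_measure_eq_zero hties)))
    exact eq_one_iff_of_isTopSet hφ01 hmono hempty hfull hinj hk hT hωA
  · intro hφk
    filter_upwards [ae_injective_of_measure_eq_zero hties] with ω hinj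
    exact lifetime_eq_orderStatE_of_isKOutOfN hφ01 hmono hempty hfull hinj hk hφk

end Probability

end SystemSignature

theorem barlow_proschan_stmt_18
    {Ω : Type*} [MeasureSpace Ω] [IsProbabilityMeasure (ℙ : Measure Ω)]
    {n : ℕ} (hn : 2 ≤ n) (X : Fin n → Ω → ℝ) (hX : ∀ i, Measurable (X i))
    (hties : ∀ i j : Fin n, i ≠ j → (ℙ : Measure Ω) {ω | X i ω = X j ω} = 0)
    (hqpos : ∀ A : Finset (Fin n),
      0 < ((ℙ : Measure Ω) {ω | ∀ i, i ∉ A → ∀ l ∈ A, X i ω < X l ω}).toReal)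
    (φ : Finset (Fin n) → ℕ) (hφ01 : ∀ A, φ A ≤ 1)
    (hmono : ∀ ⦃A B : Finset (Fin n)⦄, A ⊆ B → φ A ≤ φ B)
    (hempty : φ ∅ = 0) (hfull : φ Finset.univ = 1) :
    (-(1 / Real.log n) * ∑ k ∈ Finset.Icc 1 n,
        ((ℙ : Measure Ω) {ω |
            (⨆ (A : Finset (Fin n)) (_ : φ A = 1), ⨅ i ∈ A, (X i ω : EReal))
              = orderStatE X k ω}).toReal
          * Real.log (((ℙ : Measure Ω) {ω |
              (⨆ (A : Finset (Fin n)) (_ : φ A = 1), ⨅ i ∈ A, (X i ω : EReal))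
                = orderStatE X k ω}).toReal) = 0)
    ↔ ∃ k ∈ Finset.Icc 1 n, ∀ A : Finset (Fin n), (φ A = 1 ↔ n - k + 1 ≤ A.card) := by
  open SystemSignature in
  have hlog : Real.log n ≠ 0 := (Real.log_pos (by exact_mod_cast hn)).ne'
  change -(1 / Real.log n) * ∑ k ∈ Icc 1 n,
    signature ℙ φ X k * Real.log (signature ℙ φ X k) = 0 ↔ ∃ k ∈ Icc 1 n, IsKOutOfN φ k
  rw [mul_eq_zero, or_iff_right (by simpa using hlog), sum_mul_log_eq_zero_iff_exists_eq_one
    (p := signature ℙ φ X) (fun _ _ => ENNReal.toReal_nonneg)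
    (sum_signature_eq_one hX hties hempty hfull)]
  have hq A : (ℙ : Measure Ω) {ω | IsTopSet X ω A} ≠ 0 :=
    (ENNReal.toReal_pos_iff.1 (hqpos A)).1.ne'
  exact exists_congr fun k => and_congr_right fun hk =>
    signature_eq_one_iff hX hties hq hφ01 hmono hempty hfull hk
end
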